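/- arXiv:1512.07247 — 4 statements merged into one kernel-verified Lean document; each statement's English description precedes it below -/
import Mathlib

section
/- Let K : ℝⁿ × ℝⁿ → ℂ satisfy the smoothness condition |K(x,y) − K(x',y)| ≤ ω(|x−x'|/|x−y|)/|x−y|ⁿ whenever |x−y| > 2|x−x'|, where ω is an increasing modulus of continuity with Dini constant ‖ω‖_Dini < ∞. Then for any x, ξ with |ξ − x| ≤ d and any integrable f, ∫_{|y−x| > 2d} |K(ξ,y) − K(x,y)| |f(y)| dy ≤ c_n ‖ω‖_Dini · Mf(x), where M is the Hardy–Littlewood maximal operator and c_n depends only on the dimension n. -/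
/-!
On the dyadic annulus `2ᵏ·2d < |y - x| ≤ 2ᵏ⁺¹·2d` the smoothness of `K` bounds
`|K(ξ,y) - K(x,y)|` by `ω(2⁻ᵏ⁻¹) / (2ᵏ·2d)ⁿ`, and the annulus lies in a ball of volume
`4ⁿ (2ᵏ·2d)ⁿ`, so its contribution is at most `4ⁿ ω(2⁻ᵏ⁻¹) · Mf(x)`. Summing over `k`,
monotonicity of `ω` gives `ω(2⁻ᵏ⁻¹) log 2 ≤ ∫_{2⁻ᵏ⁻¹}^{2⁻ᵏ} ω(t)/t dt`, and these
intervals tile `(0, 1]`.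
-/

noncomputable section
open MeasureTheory ENNReal Set

/-- The (centered) Hardy–Littlewood maximal operator, with values in `ℝ≥0∞`. -/
def maximalFunction {n : ℕ} (f : (Fin n → ℝ) → ℝ) (x : Fin n → ℝ) : ℝ≥0∞ :=
  ⨆ r ∈ Ioi (0 : ℝ), (volume (Metric.ball x r))⁻¹ * ∫⁻ y in Metric.ball x r, ‖f y‖₊

open Metric Function

lemma mul_log_div_le_integral_div {ω : ℝ → ℝ} {a b : ℝ} (ha : 0 < a) (hab : a ≤ b)
    (hω : MonotoneOn ω (Icc a b)) (hint : IntegrableOn (fun t => ω t / t) (Ioc a b)) :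
    ω a * Real.log (b / a) ≤ ∫ t in Ioc a b, ω t / t := by
  have hconst : ω a * Real.log (b / a) = ∫ t in Ioc a b, ω a * (1 / t) := by
    rw [integral_const_mul, ← intervalIntegral.integral_of_le hab,
      integral_one_div_of_pos ha (ha.trans_le hab)]
  rw [hconst]
  refine setIntegral_mono_on ?_ hint measurableSet_Ioc fun t ht => ?_
  · exact (continuousOn_const.mul (continuousOn_const.div continuousOn_id
      fun t ht => (ha.trans_le ht.1).ne')).integrableOn_Icc.mono_set Ioc_subset_Icc_self
  · have ht₀ : 0 < t := ha.trans ht.1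
    rw [mul_one_div]
    gcongr
    exact hω (left_mem_Icc.2 hab) (Ioc_subset_Icc_self ht) ht.1.le

lemma tsum_ofReal_le_integral_div_log_two {ω : ℝ → ℝ} (hω : MonotoneOn ω (Ioc 0 1))
    (hω₀ : ∀ t ∈ Ioc (0 : ℝ) 1, 0 ≤ ω t) (hint : IntegrableOn (fun t => ω t / t) (Ioc 0 1)) :
    ∑' k : ℕ, ENNReal.ofReal (ω (2⁻¹ ^ (k + 1))) ≤
      ENNReal.ofReal ((∫ t in Ioc 0 1, ω t / t) / Real.log 2) := by
  have hlog : 0 < Real.log 2 := Real.log_pos one_lt_two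
  have hI : ∀ k : ℕ, Ioc ((2⁻¹ : ℝ) ^ (k + 1)) (2⁻¹ ^ k) ⊆ Ioc 0 1 := fun k t ht =>
    ⟨(pow_pos (by norm_num) _).trans ht.1, ht.2.trans (pow_le_one₀ (by norm_num) (by norm_num))⟩
  have hdisj : Pairwise (Disjoint on fun k : ℕ => Ioc ((2⁻¹ : ℝ) ^ (k + 1)) (2⁻¹ ^ k)) :=
    (pow_right_anti₀ (by norm_num : (0 : ℝ) ≤ 2⁻¹) (by norm_num)).pairwise_disjoint_on_Ioc_succ
  have hlint : ∀ s ⊆ Ioc (0 : ℝ) 1, MeasurableSet s →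
      ENNReal.ofReal (∫ t in s, ω t / t) = ∫⁻ t in s, ENNReal.ofReal (ω t / t) :=
    fun s hs hsm => ofReal_integral_eq_lintegral_ofReal (hint.mono_set hs)
      ((ae_restrict_iff' hsm).2 (ae_of_all _ fun t ht => div_nonneg (hω₀ t (hs ht)) (hs ht).1.le))
  rw [ENNReal.ofReal_div_of_pos hlog,
    ENNReal.le_div_iff_mul_le (Or.inl (by simpa using hlog)) (Or.inl ofReal_ne_top),
    ← ENNReal.tsum_mul_right, hlint _ subset_rfl measurableSet_Ioc]
  calc ∑' k : ℕ, ENNReal.ofReal (ω (2⁻¹ ^ (k + 1))) * ENNReal.ofReal (Real.log 2)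
      ≤ ∑' k : ℕ, ∫⁻ t in Ioc (2⁻¹ ^ (k + 1)) (2⁻¹ ^ k), ENNReal.ofReal (ω t / t) := by
        gcongr with k
        have ha : (2⁻¹ : ℝ) ^ (k + 1) ∈ Ioc 0 1 :=
          ⟨by positivity, pow_le_one₀ (by norm_num) (by norm_num)⟩
        have hab : (2⁻¹ : ℝ) ^ (k + 1) ≤ 2⁻¹ ^ k :=
          pow_le_pow_of_le_one (by norm_num) (by norm_num) k.le_succ
        have hratio : (2⁻¹ : ℝ) ^ k / 2⁻¹ ^ (k + 1) = 2 := by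
          rw [pow_succ]
          field_simp
        have h := mul_log_div_le_integral_div ha.1 hab
          (hω.mono (Icc_subset_Ioc ha.1 (pow_le_one₀ (by norm_num) (by norm_num))))
          (hint.mono_set (hI k))
        rw [hratio] at h
        rw [← ENNReal.ofReal_mul (hω₀ _ ha), ← hlint _ (hI k) measurableSet_Ioc]
        exact ENNReal.ofReal_le_ofReal h
    _ = ∫⁻ t in ⋃ k : ℕ, Ioc (2⁻¹ ^ (k + 1)) (2⁻¹ ^ k), ENNReal.ofReal (ω t / t) :=
        (lintegral_iUnion (fun k => measurableSet_Ioc) hdisj _).symm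
    _ ≤ ∫⁻ t in Ioc 0 1, ENNReal.ofReal (ω t / t) := lintegral_mono_set (iUnion_subset hI)

-- The annuli are open at the inner radius because the smoothness hypothesis on `K` needs the
-- strict inequality `2 |x - ξ| < |x - y|`.
lemma compl_closedBall_subset_iUnion_closedBall_diff {X : Type*} [PseudoMetricSpace X] (x : X)
    {R : ℝ} (hR : 0 < R) :
    (closedBall x R)ᶜ ⊆ ⋃ k : ℕ, closedBall x (2 * (2 ^ k * R)) \ closedBall x (2 ^ k * R) := by
  intro y hy
  rw [mem_compl_iff, mem_closedBall, not_le] at hy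
  have h1 : 1 < dist y x / R := (one_lt_div hR).2 hy
  obtain ⟨m, hm, hm'⟩ := exists_mem_Ioc_zpow (zero_lt_one.trans h1) one_lt_two
  lift m to ℕ using by
    by_contra! hneg
    exact (h1.trans_le hm').not_ge (zpow_le_one_of_nonpos₀ one_le_two (by omega))
  rw [zpow_natCast] at hm
  replace hm' : dist y x / R ≤ 2 ^ (m + 1) := mod_cast hm'
  refine mem_iUnion.2 ⟨m, ?_, ?_⟩
  · rw [mem_closedBall, ← mul_assoc, ← pow_succ']
    exact (div_le_iff₀ hR).1 hm'
  · rw [mem_closedBall, not_le]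
    exact (lt_div_iff₀ hR).1 hm

lemma norm_sub_le_of_two_mul_le_of_lt_dist {X E : Type*} [PseudoMetricSpace X]
    [SeminormedAddCommGroup E] {n : ℕ} {ω : ℝ → ℝ} (hω : MonotoneOn ω (Icc 0 1))
    (hω₀ : ∀ t ∈ Icc (0 : ℝ) 1, 0 ≤ ω t) {K : X → X → E}
    (hK : ∀ x x' y, 2 * dist x x' < dist x y →
      ‖K x y - K x' y‖ ≤ ω (dist x x' / dist x y) / dist x y ^ n)
    {x ξ y : X} {d r : ℝ} (hr : 0 < r) (hξ : dist ξ x ≤ d) (hdr : 2 * d ≤ r)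
    (hry : r < dist y x) :
    ‖K ξ y - K x y‖ ≤ ω (d / r) / r ^ n := by
  have hd : 0 ≤ d := dist_nonneg.trans hξ
  have hdr' : d / r ∈ Icc (0 : ℝ) 1 := ⟨by positivity, (div_le_one hr).2 (by linarith)⟩
  rw [dist_comm] at hξ hry
  have harg : dist x ξ / dist x y ∈ Icc (0 : ℝ) 1 :=
    ⟨by positivity, div_le_one_of_le₀ (by linarith) dist_nonneg⟩
  calc ‖K ξ y - K x y‖ = ‖K x y - K ξ y‖ := norm_sub_rev _ _
    _ ≤ ω (dist x ξ / dist x y) / dist x y ^ n := hK x ξ y (by linarith)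
    _ ≤ ω (d / r) / r ^ n := by
        gcongr
        · exact hω₀ _ hdr'
        · exact hω harg hdr' (by gcongr)

lemma pi_ball_ae_eq_closedBall {ι : Type*} [Fintype ι] (x : ι → ℝ) {r : ℝ} (hr : 0 < r) :
    ball x r =ᵐ[volume] closedBall x r :=
  ae_eq_of_subset_of_measure_ge ball_subset_closedBall
    (by rw [Real.volume_pi_ball x hr, Real.volume_pi_closedBall x hr.le])
    measurableSet_ball.nullMeasurableSet measure_closedBall_lt_top.ne

lemma setLIntegral_closedBall_le_volume_mul_maximalFunction {n : ℕ} (f : (Fin n → ℝ) → ℝ)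
    (x : Fin n → ℝ) {r : ℝ} (hr : 0 < r) :
    ∫⁻ y in closedBall x r, ‖f y‖₊ ≤ volume (closedBall x r) * maximalFunction f x := by
  rw [← Measure.restrict_congr_set (pi_ball_ae_eq_closedBall x hr),
    ← measure_congr (pi_ball_ae_eq_closedBall x hr)]
  have hvol₀ : volume (ball x r) ≠ 0 := (measure_ball_pos volume x hr).ne'
  calc ∫⁻ y in ball x r, ‖f y‖₊
      = volume (ball x r) * ((volume (ball x r))⁻¹ * ∫⁻ y in ball x r, ‖f y‖₊) := by
        rw [← mul_assoc, ENNReal.mul_inv_cancel hvol₀ measure_ball_lt_top.ne, one_mul]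
    _ ≤ volume (ball x r) * maximalFunction f x := by
        gcongr
        exact le_iSup₂ (f := fun r (_ : r ∈ Ioi (0 : ℝ)) =>
          (volume (ball x r))⁻¹ * ∫⁻ y in ball x r, (‖f y‖₊ : ℝ≥0∞)) r hr

lemma setLIntegral_closedBall_diff_closedBall_le {n : ℕ} {E : Type*} [SeminormedAddCommGroup E]
    (f : (Fin n → ℝ) → ℝ) (x : Fin n → ℝ) {g : (Fin n → ℝ) → E} {r C : ℝ} (hr : 0 < r)
    (hg : ∀ y ∈ closedBall x (2 * r) \ closedBall x r, ‖g y‖ ≤ C / r ^ n) :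
    ∫⁻ y in closedBall x (2 * r) \ closedBall x r, ‖g y‖₊ * ‖f y‖₊ ≤
      ENNReal.ofReal (4 ^ n * C) * maximalFunction f x := by
  calc ∫⁻ y in closedBall x (2 * r) \ closedBall x r, ‖g y‖₊ * ‖f y‖₊
      ≤ ∫⁻ y in closedBall x (2 * r) \ closedBall x r, ENNReal.ofReal (C / r ^ n) * ‖f y‖₊ := by
        refine setLIntegral_mono' (measurableSet_closedBall.diff measurableSet_closedBall)
          fun y hy => ?_
        rw [← enorm_eq_nnnorm, ← ofReal_norm]
        gcongr
        exact hg y hy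
    _ ≤ ENNReal.ofReal (C / r ^ n) * ∫⁻ y in closedBall x (2 * r), ‖f y‖₊ := by
        rw [lintegral_const_mul' _ _ ofReal_ne_top]
        gcongr
        exact sdiff_subset
    _ ≤ ENNReal.ofReal (C / r ^ n) * (volume (closedBall x (2 * r)) * maximalFunction f x) := by
        gcongr
        exact setLIntegral_closedBall_le_volume_mul_maximalFunction f x (by positivity)
    _ = ENNReal.ofReal (4 ^ n * C) * maximalFunction f x := by
        rw [Real.volume_pi_closedBall x (by positivity), Fintype.card_fin, ← mul_assoc,
          ← ENNReal.ofReal_mul' (by positivity)]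
        congr 2
        field_simp
        ring

lemma setLIntegral_lt_dist_le_tsum {n : ℕ} {E : Type*} [SeminormedAddCommGroup E]
    (f : (Fin n → ℝ) → ℝ) (x : Fin n → ℝ) {g : (Fin n → ℝ) → E} {R : ℝ} (hR : 0 < R)
    {C : ℕ → ℝ} (hg : ∀ k : ℕ, ∀ y ∈ closedBall x (2 * (2 ^ k * R)) \ closedBall x (2 ^ k * R),
      ‖g y‖ ≤ C k / (2 ^ k * R) ^ n) :
    ∫⁻ y in {y | R < dist y x}, ‖g y‖₊ * ‖f y‖₊ ≤
      ∑' k, ENNReal.ofReal (4 ^ n * C k) * maximalFunction f x := by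
  have hcover : {y | R < dist y x} ⊆
      ⋃ k : ℕ, closedBall x (2 * (2 ^ k * R)) \ closedBall x (2 ^ k * R) := fun y hy =>
    compl_closedBall_subset_iUnion_closedBall_diff x hR (mem_closedBall.not.2 (not_le.2 hy))
  calc ∫⁻ y in {y | R < dist y x}, ‖g y‖₊ * ‖f y‖₊
      ≤ ∑' k : ℕ, ∫⁻ y in closedBall x (2 * (2 ^ k * R)) \ closedBall x (2 ^ k * R),
          ‖g y‖₊ * ‖f y‖₊ :=
        (lintegral_mono_set hcover).trans (lintegral_iUnion_le _ _)
    _ ≤ ∑' k, ENNReal.ofReal (4 ^ n * C k) * maximalFunction f x :=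
        ENNReal.tsum_le_tsum fun k =>
          setLIntegral_closedBall_diff_closedBall_le f x (by positivity) (hg k)

/-- if the kernel `K` satisfies the Dini smoothness condition
`|K(x,y) − K(x',y)| ≤ ω(|x−x'|/|x−y|)/|x−y|ⁿ` for `|x−y| > 2|x−x'|`, then for all `x, ξ`
with `|ξ − x| ≤ d` and every integrable `f`,
`∫_{|y−x|>2d} |K(ξ,y) − K(x,y)| |f(y)| dy ≤ c_n ‖ω‖_Dini · Mf(x)`. -/
theorem annuli_smoothness_estimate (n : ℕ) :
    ∃ c : ℝ, 0 < c ∧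
      ∀ (ω : ℝ → ℝ), MonotoneOn ω (Icc 0 1) → (∀ t ∈ Icc (0:ℝ) 1, 0 ≤ ω t) → ω 0 = 0 →
        (∀ s t : ℝ, 0 ≤ s → 0 ≤ t → s + t ≤ 1 → ω (s + t) ≤ ω s + ω t) →
        IntegrableOn (fun t => ω t / t) (Ioc (0:ℝ) 1) →
      ∀ K : (Fin n → ℝ) → (Fin n → ℝ) → ℂ,
        (∀ x x' y : Fin n → ℝ, 2 * dist x x' < dist x y →
          ‖K x y - K x' y‖ ≤ ω (dist x x' / dist x y) / dist x y ^ n) →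
      ∀ (f : (Fin n → ℝ) → ℝ), Integrable f →
      ∀ (x ξ : Fin n → ℝ) (d : ℝ), 0 < d → dist ξ x ≤ d →
        (∫⁻ y in {y | 2 * d < dist y x}, ‖K ξ y - K x y‖₊ * ‖f y‖₊) ≤
          ENNReal.ofReal (c * ∫ t in Ioc (0:ℝ) 1, ω t / t) * maximalFunction f x := by
  refine ⟨4 ^ n / Real.log 2, by positivity, ?_⟩
  intro ω hω hω₀ _ _ hint K hK f _ x ξ d hd hξ
  have hannulus : ∀ k : ℕ,
      ∀ y ∈ closedBall x (2 * (2 ^ k * (2 * d))) \ closedBall x (2 ^ k * (2 * d)),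
        ‖K ξ y - K x y‖ ≤ ω (2⁻¹ ^ (k + 1)) / (2 ^ k * (2 * d)) ^ n := by
    intro k y hy
    have hratio : d / (2 ^ k * (2 * d)) = 2⁻¹ ^ (k + 1) := by
      rw [inv_pow, pow_succ]
      field_simp
    exact hratio ▸ norm_sub_le_of_two_mul_le_of_lt_dist hω hω₀ hK (by positivity) hξ
      (le_mul_of_one_le_left (by positivity) (one_le_pow₀ one_le_two)) (not_le.1 hy.2)
  calc ∫⁻ y in {y | 2 * d < dist y x}, ‖K ξ y - K x y‖₊ * ‖f y‖₊
      ≤ ∑' k, ENNReal.ofReal (4 ^ n * ω (2⁻¹ ^ (k + 1))) * maximalFunction f x :=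
        setLIntegral_lt_dist_le_tsum f x (by positivity) hannulus
    _ = ENNReal.ofReal (4 ^ n) * (∑' k, ENNReal.ofReal (ω (2⁻¹ ^ (k + 1)))) *
          maximalFunction f x := by
        simp_rw [ENNReal.ofReal_mul (by positivity : (0 : ℝ) ≤ 4 ^ n), ENNReal.tsum_mul_right,
          ENNReal.tsum_mul_left]
    _ ≤ ENNReal.ofReal (4 ^ n) * ENNReal.ofReal ((∫ t in Ioc 0 1, ω t / t) / Real.log 2) *
          maximalFunction f x := by
        gcongr
        exact tsum_ofReal_le_integral_div_log_two (hω.mono Ioc_subset_Icc_self)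
          (fun t ht => hω₀ t (Ioc_subset_Icc_self ht)) hint
    _ = _ := by
        rw [← ENNReal.ofReal_mul (by positivity)]
        congr 2
        ring
end
end

section
/- Let T be a sublinear operator of weak type (1,1) with constant ‖T‖_{L¹→L^{1,∞}}, and let Q₀ ⊂ ℝⁿ be a cube. Define the local grand maximal truncated operator M_{T,Q₀}f(x) = sup over cubes Q with x ∈ Q ⊆ Q₀ of the essential supremum over ξ ∈ Q of |T(f·χ_{3Q₀∖3Q})(ξ)|. Then for almost every x ∈ Q₀, |T(f·χ_{3Q₀})(x)| ≤ c_n ‖T‖_{L¹→L^{1,∞}} |f(x)| + M_{T,Q₀}f(x). -/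
noncomputable section
open MeasureTheory ENNReal Set

structure Cube (n : ℕ) where
  corner : Fin n → ℝ
  side : ℝ
  side_pos : 0 < side

def Cube.set {n : ℕ} (Q : Cube n) : Set (Fin n → ℝ) :=
  {x | ∀ i, Q.corner i ≤ x i ∧ x i < Q.corner i + Q.side}

def Cube.triple {n : ℕ} (Q : Cube n) : Cube n :=
  ⟨fun i => Q.corner i - Q.side, 3 * Q.side, by linarith [Q.side_pos]⟩

/-- The local grand maximal truncated operator
`M_{T,Q₀} f (x) = sup_{x ∈ Q ⊆ Q₀} ess sup_{ξ ∈ Q} |T(f χ_{3Q₀∖3Q})(ξ)|`. -/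
def localGrandMaximal {n : ℕ} (T : ((Fin n → ℝ) → ℂ) → (Fin n → ℝ) → ℂ)
    (Q₀ : Cube n) (f : (Fin n → ℝ) → ℂ) (x : Fin n → ℝ) : ℝ≥0∞ :=
  ⨆ Q : Cube n, ⨆ (_ : x ∈ Q.set ∧ Q.set ⊆ Q₀.set),
    essSup (fun ξ => (‖T ((Q₀.triple.set \ Q.triple.set).indicator f) ξ‖₊ : ℝ≥0∞))
      (volume.restrict Q.set)

/-!
Fix a Lebesgue point `x ∈ Q₀` of `f` and a small cube `Q ∋ x` of side `r / 2` inside `Q₀`, and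
split `f χ_{3Q₀} = f χ_{3Q} + f χ_{3Q₀∖3Q}`. On `Q` the second piece contributes at most
`M_{T,Q₀} f (x)` almost everywhere, while by the weak (1,1) bound the first one exceeds
`λ ≈ 2·4ⁿ C_T ⨍_{B(x,r)} |f| → 2·4ⁿ C_T |f(x)|` on at most half of `Q`. So if
`|T(f χ_{3Q₀})| > q > 2·4ⁿ C_T |f| + M_{T,Q₀} f` on a set `E`, then `E` has density at most
`1 - 1/(2·4ⁿ)` in every small ball around each of its Lebesgue points, and the Lebesgue density
theorem (which needs no measurability of `E`, hence none of `T`) makes `E` null. Taking the union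
over rational `q` proves the bound.
-/

open Filter Topology Metric

section WeakType

variable {α α' E F : Type*} [MeasurableSpace α] [NormedAddCommGroup E] [NormedAddCommGroup F]

def IsSubadditiveOnIntegrable (μ : Measure α) (T : (α → E) → α' → F) : Prop :=
  ∀ f g : α → E, Integrable f μ → Integrable g μ → ∀ x, ‖T (f + g) x‖ ≤ ‖T f x‖ + ‖T g x‖

def HasWeakTypeOneOneBound [MeasurableSpace α'] (μ : Measure α) (ν : Measure α')
    (T : (α → E) → α' → F) (C : ℝ) : Prop :=
  ∀ f : α → E, Integrable f μ → ∀ lam : ℝ, 0 < lam →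
    ENNReal.ofReal lam * ν {x | lam < ‖T f x‖} ≤ ENNReal.ofReal C * ∫⁻ y, ‖f y‖ₑ ∂μ

variable {μ : Measure α} {T : (α → E) → α' → F}

lemma IsSubadditiveOnIntegrable.enorm_add_le (hT : IsSubadditiveOnIntegrable μ T)
    {f g : α → E} (hf : Integrable f μ) (hg : Integrable g μ) (x : α') :
    ‖T (f + g) x‖ₑ ≤ ‖T f x‖ₑ + ‖T g x‖ₑ := by
  simp only [← ofReal_norm]
  rw [← ENNReal.ofReal_add (norm_nonneg _) (norm_nonneg _)]
  exact ENNReal.ofReal_le_ofReal (hT f g hf hg x)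

lemma HasWeakTypeOneOneBound.measure_lt_le [MeasurableSpace α'] {ν : Measure α'} {C : ℝ}
    (hT : HasWeakTypeOneOneBound μ ν T C) {f : α → E} (hf : Integrable f μ) {lam : ℝ}
    (hlam : 0 < lam) {V : ℝ≥0∞}
    (hV : ENNReal.ofReal C * ∫⁻ y, ‖f y‖ₑ ∂μ ≤ ENNReal.ofReal lam * V) :
    ν {x | lam < ‖T f x‖} ≤ V :=
  (ENNReal.mul_le_mul_iff_right (ENNReal.ofReal_pos.mpr hlam).ne' ofReal_ne_top).mp
    ((hT f hf lam hlam).trans hV)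

end WeakType

section Density

lemma measure_inter_add_half_le {α : Type*} [MeasurableSpace α] {μ : Measure α}
    {s t u : Set α} (ht : MeasurableSet t) (htu : t ⊆ u) (hs : μ (s ∩ t) ≤ μ t / 2) :
    μ (s ∩ u) + μ t / 2 ≤ μ u :=
  calc μ (s ∩ u) + μ t / 2 ≤ μ (s ∩ t) + μ (u \ t) + μ t / 2 := by
        gcongr
        refine (measure_mono fun y hy => ?_).trans (measure_union_le _ _)
        by_cases hyt : y ∈ t
        exacts [Or.inl ⟨hy.1, hyt⟩, Or.inr ⟨hy.2, hyt⟩]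
    _ ≤ μ t / 2 + μ (u \ t) + μ t / 2 := by gcongr
    _ = μ u := by
        have hu := measure_sdiff_add_inter (μ := μ) u ht
        rw [inter_eq_right.mpr htu] at hu
        rw [add_right_comm, ENNReal.add_halves, add_comm, hu]

variable {β : Type*} [MetricSpace β] [MeasurableSpace β] [BorelSpace β]
  [SecondCountableTopology β] [HasBesicovitchCovering β] (μ : Measure β) [IsLocallyFiniteMeasure μ]

theorem measure_eq_zero_of_frequently_measure_inter_closedBall_le {s : Set β} {ρ : ℝ≥0∞}
    (hρ : ρ < 1) (h : ∀ x ∈ s, ∃ᶠ r in 𝓝[>] 0, μ (s ∩ closedBall x r) ≤ ρ * μ (closedBall x r)) :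
    μ s = 0 := by
  set H := toMeasurable μ s
  have hnot : ∀ᵐ x ∂μ.restrict H, x ∉ s := by
    filter_upwards [Besicovitch.ae_tendsto_measure_inter_div μ H] with x hx hxs
    have hle : ∃ᶠ r in 𝓝[>] 0, μ (H ∩ closedBall x r) / μ (closedBall x r) ≤ ρ :=
      (h x hxs).mono fun r hr => by
        rw [Measure.measure_toMeasurable_inter_of_sFinite measurableSet_closedBall]
        exact ENNReal.div_le_of_le_mul hr
    obtain ⟨r, hle_r, hlt_r⟩ := (hle.and_eventually (hx.eventually (lt_mem_nhds hρ))).exists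
    exact hle_r.not_gt hlt_r
  rw [← Measure.restrict_eq_self μ (subset_toMeasurable μ s)]
  exact measure_eq_zero_iff_ae_notMem.mpr hnot

theorem ae_tendsto_average_norm_closedBall {E : Type*} [NormedAddCommGroup E] {f : β → E}
    (hf : LocallyIntegrable f μ) :
    ∀ᵐ x ∂μ, Tendsto (fun r => ⨍ y in closedBall x r, ‖f y‖ ∂μ) (𝓝[>] 0) (𝓝 ‖f x‖) := by
  have hnorm : LocallyIntegrable (fun y => ‖f y‖) μ := fun z =>
    let ⟨s, hs, hint⟩ := hf z
    ⟨s, hs, hint.norm⟩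
  filter_upwards [(Besicovitch.vitaliFamily μ).ae_tendsto_average hnorm] with x hx
  exact hx.comp (Besicovitch.tendsto_filterAt μ x)

end Density

lemma setLIntegral_enorm_le_of_subset_closedBall {n : ℕ} {E : Type*} [NormedAddCommGroup E]
    {f : (Fin n → ℝ) → E} (hf : LocallyIntegrable f) {s : Set (Fin n → ℝ)} {x : Fin n → ℝ} {r : ℝ}
    (hr : 0 ≤ r) (hs : s ⊆ closedBall x r) :
    ∫⁻ y in s, ‖f y‖ₑ ≤ ENNReal.ofReal ((2 * r) ^ n * ⨍ y in closedBall x r, ‖f y‖) :=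
  calc ∫⁻ y in s, ‖f y‖ₑ ≤ ∫⁻ y in closedBall x r, ‖f y‖ₑ := lintegral_mono_set hs
    _ = ENNReal.ofReal (∫ y in closedBall x r, ‖f y‖) :=
      (ofReal_integral_norm_eq_lintegral_enorm
        (hf.integrableOn_isCompact (isCompact_closedBall x r))).symm
    _ = ENNReal.ofReal ((2 * r) ^ n * ⨍ y in closedBall x r, ‖f y‖) := by
      rw [← measure_smul_setAverage _ measure_closedBall_lt_top.ne, smul_eq_mul, measureReal_def,
        Real.volume_pi_closedBall x hr, Fintype.card_fin, ENNReal.toReal_ofReal (by positivity)]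

namespace Cube

variable {n : ℕ}

lemma set_eq_pi (Q : Cube n) :
    Q.set = pi univ fun i => Ico (Q.corner i) (Q.corner i + Q.side) := by
  ext x
  simp [Cube.set, Set.mem_pi]

lemma measurableSet_set (Q : Cube n) : MeasurableSet Q.set := by
  rw [set_eq_pi]
  exact MeasurableSet.univ_pi fun i => measurableSet_Ico

lemma volume_set (Q : Cube n) : volume Q.set = ENNReal.ofReal (Q.side ^ n) := by
  rw [set_eq_pi, volume_pi_pi]
  simp [Real.volume_Ico, ENNReal.ofReal_pow Q.side_pos.le]

lemma corner_mem (Q : Cube n) : Q.corner ∈ Q.set :=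
  fun _ => ⟨le_rfl, lt_add_of_pos_right _ Q.side_pos⟩

lemma integrableOn_set {f : (Fin n → ℝ) → ℂ} (hf : LocallyIntegrable f) (Q : Cube n) :
    IntegrableOn f Q.set :=
  (hf.integrableOn_isCompact isCompact_Icc).mono_set
    (fun _ hx => ⟨fun i => (hx i).1, fun i => (hx i).2.le⟩ :
      Q.set ⊆ Icc Q.corner fun i => Q.corner i + Q.side)

lemma subset_triple (Q : Cube n) : Q.set ⊆ Q.triple.set := fun y hy i => by
  have := Q.side_pos
  constructor <;> simp only [Cube.triple] <;> linarith [hy i]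

lemma triple_subset_triple {Q Q₀ : Cube n} (h : Q.set ⊆ Q₀.set) :
    Q.triple.set ⊆ Q₀.triple.set := by
  have hcoord : ∀ i, Q₀.corner i ≤ Q.corner i ∧ Q.corner i + Q.side ≤ Q₀.corner i + Q₀.side := by
    rw [set_eq_pi, set_eq_pi, pi_subset_pi_iff] at h
    rcases h with h | h
    · exact fun i => (Ico_subset_Ico_iff (lt_add_of_pos_right _ Q.side_pos)).mp (h i (mem_univ i))
    · have hc := Q.corner_mem
      rw [set_eq_pi, h] at hc
      exact absurd hc (notMem_empty _)
  intro y hy i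
  have := hy i
  simp only [Cube.triple] at this ⊢
  constructor <;> linarith [hcoord i]

lemma exists_subcube {Q₀ : Cube n} {x : Fin n → ℝ} (hx : x ∈ Q₀.set) {r : ℝ} (hr : 0 < r)
    (hr' : r ≤ 2 * Q₀.side) :
    ∃ Q : Cube n, Q.side = r / 2 ∧ x ∈ Q.set ∧ Q.set ⊆ Q₀.set ∧
      Q.triple.set ⊆ closedBall x r := by
  -- slide the cube of side `r / 2` with corner `x` back into `Q₀` where it sticks out
  set c : Fin n → ℝ := fun i => min (x i) (Q₀.corner i + Q₀.side - r / 2)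
  have hc : ∀ i, Q₀.corner i ≤ c i ∧ c i ≤ x i ∧ x i < c i + r / 2 ∧
      c i + r / 2 ≤ Q₀.corner i + Q₀.side := fun i => by
    have := hx i
    simp only [c]
    refine ⟨le_min this.1 (by linarith), min_le_left _ _, ?_,
      by linarith [min_le_right (x i) (Q₀.corner i + Q₀.side - r / 2)]⟩
    rcases min_choice (x i) (Q₀.corner i + Q₀.side - r / 2) with h | h <;> rw [h] <;> linarith
  refine ⟨⟨c, r / 2, half_pos hr⟩, rfl, fun i => ⟨(hc i).2.1, (hc i).2.2.1⟩,
    fun y hy i => ⟨by linarith [(hc i).1, (hy i).1], by linarith [(hc i).2.2.2, (hy i).2]⟩, ?_⟩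
  intro y hy
  rw [mem_closedBall, dist_pi_le_iff hr.le]
  intro i
  have := hy i
  simp only [Cube.triple] at this
  rw [Real.dist_eq, abs_le]
  constructor <;> linarith [hc i]

lemma measure_inter_closedBall_le {Q : Cube n} {x : Fin n → ℝ} {r : ℝ} (hside : Q.side = r / 2)
    (hQ : Q.set ⊆ closedBall x r) {s : Set (Fin n → ℝ)}
    (hs : volume (s ∩ Q.set) ≤ volume Q.set / 2) :
    volume (s ∩ closedBall x r) ≤ (1 - (2 * 4 ^ n)⁻¹) * volume (closedBall x r) := by
  have hr : 0 < r := by linarith [Q.side_pos]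
  have hball : volume (closedBall x r) = 4 ^ n * volume Q.set := by
    rw [Real.volume_pi_closedBall x hr.le, Q.volume_set, hside, Fintype.card_fin,
      ← ENNReal.ofReal_ofNat, ← ENNReal.ofReal_pow (by norm_num),
      ← ENNReal.ofReal_mul (by positivity)]
    congr 1
    rw [← mul_pow]
    ring_nf
  have hhalf : volume Q.set / 2 = (2 * 4 ^ n)⁻¹ * volume (closedBall x r) := by
    rw [hball, ← mul_assoc, ENNReal.mul_inv (by simp) (by simp), mul_assoc 2⁻¹,
      ENNReal.inv_mul_cancel (by simp) (by simp), mul_one, ENNReal.div_eq_inv_mul]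
  have hfin : volume (closedBall x r) ≠ ∞ := measure_closedBall_lt_top.ne
  have key := measure_inter_add_half_le Q.measurableSet_set hQ hs
  rw [hhalf] at key
  rw [ENNReal.sub_mul fun _ _ => hfin, one_mul]
  exact ENNReal.le_sub_of_add_le_right (ENNReal.mul_ne_top (by simp) hfin) key

lemma ofReal_mul_lintegral_triple_le {f : (Fin n → ℝ) → ℂ} (hf : LocallyIntegrable f) {C : ℝ}
    (hC : 0 ≤ C) {Q : Cube n} {x : Fin n → ℝ} {r : ℝ} (hside : Q.side = r / 2)
    (hQ : Q.triple.set ⊆ closedBall x r) {lam : ℝ}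
    (hlam : 2 * 4 ^ n * C * ⨍ y in closedBall x r, ‖f y‖ ≤ lam) :
    ENNReal.ofReal C * ∫⁻ y in Q.triple.set, ‖f y‖ₑ ≤ ENNReal.ofReal lam * (volume Q.set / 2) := by
  have hr : r = 2 * Q.side := by linarith
  have hside_nonneg := Q.side_pos.le
  have hr_nonneg : 0 ≤ r := by linarith
  calc ENNReal.ofReal C * ∫⁻ y in Q.triple.set, ‖f y‖ₑ
      ≤ ENNReal.ofReal C * ENNReal.ofReal ((2 * r) ^ n * ⨍ y in closedBall x r, ‖f y‖) := by
        gcongr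
        exact setLIntegral_enorm_le_of_subset_closedBall hf hr_nonneg hQ
    _ = ENNReal.ofReal (2 * 4 ^ n * C * (⨍ y in closedBall x r, ‖f y‖) * (Q.side ^ n / 2)) := by
        rw [← ENNReal.ofReal_mul hC, hr, show 2 * (2 * Q.side) = 4 * Q.side by ring, mul_pow]
        ring_nf
    _ ≤ ENNReal.ofReal (lam * (Q.side ^ n / 2)) :=
        ENNReal.ofReal_le_ofReal (mul_le_mul_of_nonneg_right hlam (by positivity))
    _ = ENNReal.ofReal lam * (volume Q.set / 2) := by
        rw [Q.volume_set, ENNReal.ofReal_mul' (by positivity), ENNReal.ofReal_div_of_pos two_pos,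
          ENNReal.ofReal_ofNat]

end Cube

section LocalEstimate

variable {n : ℕ} {T : ((Fin n → ℝ) → ℂ) → (Fin n → ℝ) → ℂ} {CT : ℝ} {Q₀ Q : Cube n}
  {f : (Fin n → ℝ) → ℂ} {x : Fin n → ℝ}

lemma ae_enorm_le_localGrandMaximal (hQ : Q.set ⊆ Q₀.set) (hx : x ∈ Q.set) :
    ∀ᵐ ξ ∂volume.restrict Q.set,
      ‖T ((Q₀.triple.set \ Q.triple.set).indicator f) ξ‖ₑ ≤ localGrandMaximal T Q₀ f x :=
  (ae_le_essSup _).mono fun _ hξ => hξ.trans (le_iSup₂_of_le Q ⟨hx, hQ⟩ le_rfl)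

lemma measure_lt_enorm_inter_cube_le_half (hsub : IsSubadditiveOnIntegrable volume T)
    (hweak : HasWeakTypeOneOneBound volume volume T CT) (hf : LocallyIntegrable f)
    (hQ : Q.set ⊆ Q₀.set) (hx : x ∈ Q.set) {lam : ℝ} (hlam : 0 < lam)
    (hJ : ENNReal.ofReal CT * ∫⁻ y in Q.triple.set, ‖f y‖ₑ ≤
      ENNReal.ofReal lam * (volume Q.set / 2))
    {t : ℝ≥0∞} (ht : ENNReal.ofReal lam + localGrandMaximal T Q₀ f x ≤ t) :
    volume ({ξ | t < ‖T (Q₀.triple.set.indicator f) ξ‖ₑ} ∩ Q.set) ≤ volume Q.set / 2 := by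
  set near := Q.triple.set.indicator f
  set far := (Q₀.triple.set \ Q.triple.set).indicator f
  have hsplit : Q₀.triple.set.indicator f = near + far := by
    have := indicator_union_of_disjoint
      (disjoint_sdiff_right (s := Q.triple.set) (t := Q₀.triple.set)) f
    rwa [union_sdiff_cancel (Cube.triple_subset_triple hQ)] at this
  have hnear : Integrable near :=
    (Q.triple.integrableOn_set hf).integrable_indicator Q.triple.measurableSet_set
  have hfar : Integrable far :=
    ((Q₀.triple.integrableOn_set hf).mono_set sdiff_subset).integrable_indicator
      (Q₀.triple.measurableSet_set.diff Q.triple.measurableSet_set)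
  have hnear_level : volume {ξ | lam < ‖T near ξ‖} ≤ volume Q.set / 2 := by
    refine hweak.measure_lt_le hnear hlam ?_
    simpa only [near, enorm_indicator_eq_indicator_enorm,
      lintegral_indicator Q.triple.measurableSet_set] using hJ
  have hfar_null :
      volume ({ξ | localGrandMaximal T Q₀ f x < ‖T far ξ‖ₑ} ∩ Q.set) = 0 := by
    simpa only [ae_iff, not_le, Measure.restrict_apply' Q.measurableSet_set] using
      ae_enorm_le_localGrandMaximal (T := T) (f := f) hQ hx
  have hcover : {ξ | t < ‖T (Q₀.triple.set.indicator f) ξ‖ₑ} ∩ Q.set ⊆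
      {ξ | lam < ‖T near ξ‖} ∪ {ξ | localGrandMaximal T Q₀ f x < ‖T far ξ‖ₑ} ∩ Q.set := by
    rintro ξ ⟨hξ, hξQ⟩
    by_contra hcon
    have hnear_le : ‖T near ξ‖ ≤ lam := not_lt.mp fun h => hcon (Or.inl h)
    have hfar_le : ‖T far ξ‖ₑ ≤ localGrandMaximal T Q₀ f x :=
      not_lt.mp fun h => hcon (Or.inr ⟨h, hξQ⟩)
    have hle : ‖T near ξ‖ₑ + ‖T far ξ‖ₑ ≤ t :=
      (add_le_add (ofReal_norm (T near ξ) ▸ ENNReal.ofReal_le_ofReal hnear_le) hfar_le).trans ht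
    exact (hξ.trans_le ((hsplit ▸ hsub.enorm_add_le hnear hfar ξ).trans hle)).false
  calc _ ≤ volume {ξ | lam < ‖T near ξ‖} +
        volume ({ξ | localGrandMaximal T Q₀ f x < ‖T far ξ‖ₑ} ∩ Q.set) :=
        (measure_mono hcover).trans (measure_union_le _ _)
    _ ≤ volume Q.set / 2 := by rwa [hfar_null, add_zero]

lemma eventually_exists_cube_measure_lt_enorm_le_half (hCT : 0 ≤ CT)
    (hsub : IsSubadditiveOnIntegrable volume T) (hweak : HasWeakTypeOneOneBound volume volume T CT)
    (hf : LocallyIntegrable f) (hxQ₀ : x ∈ Q₀.set)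
    (hx : Tendsto (fun r => ⨍ y in closedBall x r, ‖f y‖) (𝓝[>] 0) (𝓝 ‖f x‖)) {t : ℝ≥0∞}
    (ht : ENNReal.ofReal (2 * 4 ^ n * CT) * ‖f x‖ₑ + localGrandMaximal T Q₀ f x < t) :
    ∀ᶠ r in 𝓝[>] 0, ∃ Q : Cube n, Q.side = r / 2 ∧ Q.set ⊆ closedBall x r ∧
      volume ({ξ | t < ‖T (Q₀.triple.set.indicator f) ξ‖ₑ} ∩ Q.set) ≤ volume Q.set / 2 := by
  set avg : ℝ → ℝ := fun r => ⨍ y in closedBall x r, ‖f y‖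
  -- the `+ r` keeps `lam r` positive without changing its limit
  set lam : ℝ → ℝ := fun r => 2 * 4 ^ n * CT * avg r + r
  have hlam : Tendsto lam (𝓝[>] 0) (𝓝 (2 * 4 ^ n * CT * ‖f x‖)) := by
    simpa using (hx.const_mul (2 * 4 ^ n * CT)).add (tendsto_nhdsWithin_of_tendsto_nhds tendsto_id)
  have hlam_lt : ∀ᶠ r in 𝓝[>] 0, ENNReal.ofReal (lam r) + localGrandMaximal T Q₀ f x < t := by
    refine hlam.eventually ((isOpen_lt (ENNReal.continuous_ofReal.add continuous_const)
      continuous_const).mem_nhds ?_)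
    show ENNReal.ofReal (2 * 4 ^ n * CT * ‖f x‖) + _ < t
    rwa [ENNReal.ofReal_mul (by positivity), ofReal_norm]
  filter_upwards [hlam_lt, self_mem_nhdsWithin, Ioc_mem_nhdsGT (by linarith [Q₀.side_pos] :
    (0 : ℝ) < 2 * Q₀.side)] with r hr (hr0 : 0 < r) hr1
  obtain ⟨Q, hside, hxQ, hQ, hQball⟩ := Cube.exists_subcube hxQ₀ hr0 hr1.2
  have havg : 0 ≤ avg r := by
    simp only [avg, setAverage_eq, smul_eq_mul]
    exact mul_nonneg (inv_nonneg.mpr measureReal_nonneg) (integral_nonneg fun _ => norm_nonneg _)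
  refine ⟨Q, hside, Q.subset_triple.trans hQball,
    measure_lt_enorm_inter_cube_le_half hsub hweak hf hQ hxQ (by positivity) ?_ hr.le⟩
  exact Q.ofReal_mul_lintegral_triple_le hf hCT hside hQball (le_add_of_nonneg_right hr0.le)

end LocalEstimate

/-- if `T` is sublinear and of weak type `(1,1)` with constant `C_T`, then
for a.e. `x ∈ Q₀`, `|T(f χ_{3Q₀})(x)| ≤ c_n C_T |f(x)| + M_{T,Q₀} f (x)`. -/
theorem local_pointwise_bound (n : ℕ) :
    ∃ c : ℝ, 0 < c ∧
      ∀ (T : ((Fin n → ℝ) → ℂ) → (Fin n → ℝ) → ℂ) (CT : ℝ), 0 ≤ CT →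
        (∀ f g : (Fin n → ℝ) → ℂ, Integrable f → Integrable g →
          ∀ x, ‖T (f + g) x‖ ≤ ‖T f x‖ + ‖T g x‖) →
        (∀ (f : (Fin n → ℝ) → ℂ), Integrable f → ∀ lam : ℝ, 0 < lam →
          ENNReal.ofReal lam * volume {x | lam < ‖T f x‖} ≤
            ENNReal.ofReal CT * ∫⁻ y, ‖f y‖₊) →
      ∀ (Q₀ : Cube n) (f : (Fin n → ℝ) → ℂ), LocallyIntegrable f →
        ∀ᵐ x : Fin n → ℝ, x ∈ Q₀.set →
          (‖T (Q₀.triple.set.indicator f) x‖₊ : ℝ≥0∞) ≤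
            ENNReal.ofReal (c * CT) * ‖f x‖₊ + localGrandMaximal T Q₀ f x := by
  refine ⟨2 * 4 ^ n, by positivity, fun T CT hCT hsub hweak Q₀ f hf => ?_⟩
  set bad : ℝ≥0∞ → Set (Fin n → ℝ) := fun t => {x | x ∈ Q₀.set ∧
    Tendsto (fun r => ⨍ y in closedBall x r, ‖f y‖) (𝓝[>] 0) (𝓝 ‖f x‖) ∧
    ENNReal.ofReal (2 * 4 ^ n * CT) * ‖f x‖ₑ + localGrandMaximal T Q₀ f x < t ∧
    t < ‖T (Q₀.triple.set.indicator f) x‖ₑ}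
  have hbad : ∀ t, volume (bad t) = 0 := by
    intro t
    refine measure_eq_zero_of_frequently_measure_inter_closedBall_le volume
      (ρ := 1 - (2 * 4 ^ n)⁻¹)
      (ENNReal.sub_lt_self one_ne_top one_ne_zero (ENNReal.inv_ne_zero.mpr (by finiteness))) ?_
    rintro x ⟨hxQ₀, hx_leb, hx_lt, -⟩
    refine (eventually_exists_cube_measure_lt_enorm_le_half hCT hsub hweak hf hxQ₀ hx_leb
      hx_lt).frequently.mono ?_
    rintro r ⟨Q, hside, hQball, hQ⟩
    refine Cube.measure_inter_closedBall_le hside hQball ((measure_mono ?_).trans hQ)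
    exact inter_subset_inter_left _ fun y hy => hy.2.2.2
  filter_upwards [ae_tendsto_average_norm_closedBall volume hf,
    measure_eq_zero_iff_ae_notMem.mp (measure_iUnion_null fun q : ℚ => hbad (ENNReal.ofReal q))]
    with x hx hx_good hxQ₀
  by_contra! h
  obtain ⟨q, -, hq_lt, hq_gt⟩ := ENNReal.lt_iff_exists_rat_btwn.mp h
  exact hx_good (mem_iUnion.mpr ⟨q, hxQ₀, hx, hq_lt, hq_gt⟩)
end
end

section
/- Suppose for each cube Q₀ ⊂ ℝⁿ and suitable f there exist pairwise disjoint dyadic subcubes P_j ∈ 𝒟(Q₀) with ∑_j |P_j| ≤ (1/2)|Q₀| such that |T(f·χ_{3Q₀})(x)| ≤ A·⟨|f|⟩_{3Q₀} + ∑_j |T(f·χ_{3P_j})(x)| χ_{P_j}(x) for a.e. x ∈ Q₀, where ⟨|f|⟩_{3Q₀} is the average of |f| over 3Q₀. Then, by iteration, there exists a 1/2-sparse family ℱ ⊆ 𝒟(Q₀) such that |T(f·χ_{3Q₀})(x)| ≤ 2A ∑_{Q∈ℱ} ⟨|f|⟩_{3Q} χ_Q(x) for a.e. x ∈ Q₀.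 -/
noncomputable section
open MeasureTheory ENNReal Set

def Cube.IsDyadicIn {n : ℕ} (Q Q₀ : Cube n) : Prop :=
  ∃ k : ℕ, ∃ m : Fin n → ℕ, (∀ i, m i < 2 ^ k) ∧
    Q.side = Q₀.side / 2 ^ k ∧
    ∀ i, Q.corner i = Q₀.corner i + (m i : ℝ) * (Q₀.side / 2 ^ k)

def IsSparse {n : ℕ} (η : ℝ) (S : Set (Cube n)) : Prop :=
  ∃ E : Cube n → Set (Fin n → ℝ),
    (∀ Q ∈ S, E Q ⊆ Q.set ∧ MeasurableSet (E Q) ∧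
      ENNReal.ofReal η * volume Q.set ≤ volume (E Q)) ∧
    S.PairwiseDisjoint E

/-- The average of `|f|` over a cube, as a real number. -/
def avgAbs {n : ℕ} (f : (Fin n → ℝ) → ℝ) (Q : Cube n) : ℝ≥0∞ :=
  (volume Q.set)⁻¹ * ∫⁻ x in Q.set, ‖f x‖₊

lemma Cube.set_eq_pi_s5 {n : ℕ} (Q : Cube n) :
    Q.set = Set.pi Set.univ (fun i => Set.Ico (Q.corner i) (Q.corner i + Q.side)) := by
  ext x; simp [Cube.set, Set.mem_pi, Set.mem_Ico]

lemma Cube.measurableSet_set_s5 {n : ℕ} (Q : Cube n) : MeasurableSet Q.set := by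
  rw [Cube.set_eq_pi_s5]; exact MeasurableSet.univ_pi fun i => measurableSet_Ico

lemma Cube.volume_set_s5 {n : ℕ} (Q : Cube n) :
    volume Q.set = (ENNReal.ofReal Q.side) ^ n := by
  rw [Cube.set_eq_pi_s5, volume_pi_pi]
  simp [Real.volume_Ico]

lemma Cube.volume_pos {n : ℕ} (Q : Cube n) : 0 < volume Q.set := by
  rw [Cube.volume_set_s5]
  exact ENNReal.pow_pos (by simp [ENNReal.ofReal_pos, Q.side_pos]) n

lemma Cube.volume_ne_top {n : ℕ} (Q : Cube n) : volume Q.set ≠ ⊤ := by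
  rw [Cube.volume_set_s5]
  exact pow_ne_top ofReal_ne_top

lemma Cube.IsDyadicIn.refl {n : ℕ} (Q : Cube n) : Q.IsDyadicIn Q := by
  exact ⟨0, fun _ => 0, fun i => by norm_num, by norm_num, fun i => by norm_num⟩

lemma Cube.IsDyadicIn.subset {n : ℕ} {Q Q₀ : Cube n} (h : Q.IsDyadicIn Q₀) :
    Q.set ⊆ Q₀.set := by
  obtain ⟨k, m, hm, hs, hc⟩ := h
  intro x hx i
  have h1 := (hx i).1
  have h2 := (hx i).2
  rw [hc i] at h1
  rw [hc i, hs] at h2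
  have hpos : (0:ℝ) < Q₀.side / 2 ^ k := by
    apply div_pos Q₀.side_pos; positivity
  have hmk : ((m i : ℝ) + 1) ≤ 2 ^ k := by
    exact_mod_cast Nat.succ_le_of_lt (hm i)
  have hnn : (0:ℝ) ≤ (m i : ℝ) * (Q₀.side / 2 ^ k) :=
    mul_nonneg (Nat.cast_nonneg _) hpos.le
  constructor
  · linarith
  · have h3 : ((m i : ℝ) + 1) * (Q₀.side / 2 ^ k) ≤ (2:ℝ)^k * (Q₀.side / 2 ^ k) :=
      mul_le_mul_of_nonneg_right hmk (le_of_lt hpos)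
    have h4 : (2:ℝ)^k * (Q₀.side / 2 ^ k) = Q₀.side := by field_simp
    have h5 : ((m i : ℝ) + 1) * (Q₀.side / 2 ^ k) = (m i : ℝ) * (Q₀.side / 2 ^ k) + Q₀.side / 2 ^ k := by ring
    linarith

lemma Cube.IsDyadicIn.trans {n : ℕ} {Q₂ Q₁ Q₀ : Cube n}
    (h21 : Q₂.IsDyadicIn Q₁) (h10 : Q₁.IsDyadicIn Q₀) : Q₂.IsDyadicIn Q₀ := by
  obtain ⟨k, m, hm, hs, hc⟩ := h21
  obtain ⟨k', m', hm', hs', hc'⟩ := h10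
  refine ⟨k' + k, fun i => m' i * 2 ^ k + m i, fun i => ?_, ?_, fun i => ?_⟩
  · have h1 : m' i ≤ 2 ^ k' - 1 := Nat.le_sub_one_of_lt (hm' i)
    calc m' i * 2 ^ k + m i < m' i * 2 ^ k + 2 ^ k := Nat.add_lt_add_left (hm i) _
    _ = (m' i + 1) * 2 ^ k := by ring
    _ ≤ 2 ^ k' * 2 ^ k := Nat.mul_le_mul_right _ (hm' i)
    _ = 2 ^ (k' + k) := (pow_add 2 k' k).symm
  · rw [hs, hs', pow_add]; ring
  · rw [hc i, hc' i, hs']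
    push_cast
    have : (2:ℝ) ^ (k' + k) = 2 ^ k' * 2 ^ k := pow_add 2 k' k
    field_simp [this]
    ring


section Gen
variable {n : ℕ} {P : Cube n → Set (Cube n)} {Q₀ : Cube n}

def gen (P : Cube n → Set (Cube n)) (Q₀ : Cube n) : ℕ → Set (Cube n)
  | 0 => {Q₀}
  | (k+1) => ⋃ Q ∈ gen P Q₀ k, P Q

lemma gen_countable (hPcount : ∀ Q : Cube n, (P Q).Countable) :
    ∀ k, (gen P Q₀ k).Countable
  | 0 => Set.countable_singleton _
  | (k+1) => (gen_countable hPcount k).biUnion (fun Q _ => hPcount Q)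

lemma gen_dyadic (hPdyad : ∀ Q : Cube n, ∀ Q' ∈ P Q, Q'.IsDyadicIn Q) :
    ∀ k, ∀ Q ∈ gen P Q₀ k, Q.IsDyadicIn Q₀
  | 0, Q, hQ => by rw [gen, Set.mem_singleton_iff] at hQ; subst hQ; exact Cube.IsDyadicIn.refl Q
  | (k+1), Q, hQ => by
    rw [gen, Set.mem_iUnion₂] at hQ
    obtain ⟨R, hR, hQR⟩ := hQ
    exact (hPdyad R Q hQR).trans (gen_dyadic hPdyad k R hR)

lemma gen_pairwiseDisjoint (hPdyad : ∀ Q : Cube n, ∀ Q' ∈ P Q, Q'.IsDyadicIn Q)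
    (hPdisj : ∀ Q : Cube n, (P Q).PairwiseDisjoint Cube.set) :
    ∀ k, (gen P Q₀ k).PairwiseDisjoint Cube.set
  | 0 => Set.pairwiseDisjoint_singleton _ _
  | (k+1) => by
    intro Q hQ R hR hQR
    rw [gen, Set.mem_iUnion₂] at hQ hR
    obtain ⟨Q', hQ', hQQ'⟩ := hQ
    obtain ⟨R', hR', hRR'⟩ := hR
    by_cases h : Q' = R'
    · subst h
      exact hPdisj Q' hQQ' hRR' hQR
    · exact Set.disjoint_of_subset (hPdyad Q' Q hQQ').subset (hPdyad R' R hRR').subset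
        (gen_pairwiseDisjoint hPdyad hPdisj k hQ' hR' h)

/-- volume of a child is at most half the parent's -/
lemma child_vol_le
    (hPsum : ∀ Q : Cube n, (∑' Q' : P Q, volume (Q' : Cube n).set) ≤ (1/2) * volume Q.set)
    {Q Q' : Cube n} (h : Q' ∈ P Q) :
    volume Q'.set ≤ (1/2) * volume Q.set :=
  le_trans (ENNReal.le_tsum (f := fun Q' : P Q => volume (Q' : Cube n).set) ⟨Q', h⟩) (hPsum Q)

/-- ancestor lemma -/
lemma gen_ancestor (hPdyad : ∀ Q : Cube n, ∀ Q' ∈ P Q, Q'.IsDyadicIn Q) {k : ℕ} :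
    ∀ m, k ≤ m → ∀ Q ∈ gen P Q₀ m, ∃ R ∈ gen P Q₀ k, Q.set ⊆ R.set := by
  intro m
  induction m with
  | zero => intro hk Q hQ; exact ⟨Q, by simpa [Nat.le_zero.mp hk] using hQ, subset_rfl⟩
  | succ m ih =>
    intro hk Q hQ
    rcases Nat.eq_or_lt_of_le hk with h | h
    · exact ⟨Q, h ▸ hQ, subset_rfl⟩
    · rw [gen, Set.mem_iUnion₂] at hQ
      obtain ⟨R, hR, hQR⟩ := hQ
      obtain ⟨R', hR', hRR'⟩ := ih (Nat.lt_succ_iff.mp h) R hR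
      exact ⟨R', hR', ((hPdyad R Q hQR).subset).trans hRR'⟩

/-- strict ancestor lemma -/
lemma gen_ancestor_strict (hPdyad : ∀ Q : Cube n, ∀ Q' ∈ P Q, Q'.IsDyadicIn Q) {k : ℕ} :
    ∀ m, k < m → ∀ Q ∈ gen P Q₀ m,
    ∃ R ∈ gen P Q₀ k, ∃ R₁ ∈ P R, Q.set ⊆ R₁.set := by
  intro m hk Q hQ
  obtain ⟨R₁, hR₁, hQR₁⟩ := gen_ancestor hPdyad (k := k+1) m hk Q hQ
  rw [gen, Set.mem_iUnion₂] at hR₁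
  obtain ⟨R, hR, hRR₁⟩ := hR₁
  exact ⟨R, hR, R₁, hRR₁, hQR₁⟩

lemma gen_level_unique (hPdyad : ∀ Q : Cube n, ∀ Q' ∈ P Q, Q'.IsDyadicIn Q)
    (hPdisj : ∀ Q : Cube n, (P Q).PairwiseDisjoint Cube.set)
    (hPsum : ∀ Q : Cube n, (∑' Q' : P Q, volume (Q' : Cube n).set) ≤ (1/2) * volume Q.set)
    {j j' : ℕ} {Q : Cube n} (hj : Q ∈ gen P Q₀ j) (hj' : Q ∈ gen P Q₀ j') :
    j = j' := by
  by_contra hne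
  wlog h : j < j' generalizing j j'
  · exact this hj' hj (Ne.symm hne) (by omega)
  obtain ⟨R, hR, R₁, hR₁, hQR₁⟩ := gen_ancestor_strict hPdyad j' h Q hj'
  have hReq : R = Q := by
    by_contra hRQ
    have hdisj := gen_pairwiseDisjoint hPdyad hPdisj j hR hj hRQ
    have hsub : Q.set ⊆ R.set := hQR₁.trans (hPdyad R R₁ hR₁).subset
    have hempty : Q.set = ∅ := by
      have h0 := Set.disjoint_iff_inter_eq_empty.mp hdisj
      have hsub2 : Q.set ⊆ R.set ∩ Q.set := Set.subset_inter hsub subset_rfl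
      rw [h0] at hsub2
      exact Set.subset_eq_empty hsub2 rfl
    exact absurd (hempty ▸ Q.volume_pos) (by simp)
  subst hReq
  have h1 : volume R.set ≤ volume R₁.set := measure_mono hQR₁
  have h2 : volume R₁.set ≤ (1/2) * volume R.set := child_vol_le hPsum hR₁
  have h3 : volume R.set ≤ (1/2) * volume R.set := h1.trans h2
  have hlt : (1/2) * volume R.set < volume R.set := by
    rw [one_div, ← ENNReal.div_eq_inv_mul]
    exact ENNReal.half_lt_self R.volume_pos.ne' R.volume_ne_top
  exact absurd h3 (not_le.mpr hlt)

/-- parent uniqueness within a generation -/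
lemma gen_parent_unique (hPdyad : ∀ Q : Cube n, ∀ Q' ∈ P Q, Q'.IsDyadicIn Q)
    (hPdisj : ∀ Q : Cube n, (P Q).PairwiseDisjoint Cube.set)
    {k : ℕ} {Q R : Cube n} {Q' : Cube n}
    (hQ : Q ∈ gen P Q₀ k) (hR : R ∈ gen P Q₀ k) (hQ' : Q' ∈ P Q) (hR' : Q' ∈ P R) :
    Q = R := by
  by_contra hne
  have hdisj := gen_pairwiseDisjoint hPdyad hPdisj k hQ hR hne
  have h1 : Q'.set ⊆ Q.set := (hPdyad Q Q' hQ').subset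
  have h2 : Q'.set ⊆ R.set := (hPdyad R Q' hR').subset
  have hempty : Q'.set = ∅ := by
    have h0 := Set.disjoint_iff_inter_eq_empty.mp hdisj
    have hsub : Q'.set ⊆ Q.set ∩ R.set := Set.subset_inter h1 h2
    rw [h0] at hsub
    exact Set.subset_eq_empty hsub rfl
  exact absurd (hempty ▸ Q'.volume_pos) (by simp)

/-- total volume of generation k -/
lemma gen_vol_le
    (hPsum : ∀ Q : Cube n, (∑' Q' : P Q, volume (Q' : Cube n).set) ≤ (1/2) * volume Q.set) :
    ∀ k, (∑' Q : gen P Q₀ k, volume (Q : Cube n).set) ≤ (1/2)^k * volume Q₀.set := by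
  intro k
  induction k with
  | zero =>
    simp only [gen, pow_zero, one_mul]
    exact le_of_eq (tsum_singleton Q₀ (fun b => volume b.set))
  | succ k ih =>
    have hXmem : ∀ Q' : gen P Q₀ (k+1), ∃ Q, Q ∈ gen P Q₀ k ∧ (Q' : Cube n) ∈ P Q := by
      rintro ⟨Q', hQ'⟩
      rw [gen, Set.mem_iUnion₂] at hQ'
      obtain ⟨R, hR, h2⟩ := hQ'
      exact ⟨R, hR, h2⟩
    choose par hpar1 hpar2 using hXmem
    let ι : gen P Q₀ (k+1) → Σ Q : gen P Q₀ k, P (Q : Cube n) :=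
      fun Q' => ⟨⟨par Q', hpar1 Q'⟩, ⟨(Q' : Cube n), hpar2 Q'⟩⟩
    have hinj : Function.Injective ι := by
      intro a b hab
      have := congrArg (fun σ : Σ Q : gen P Q₀ k, P (Q : Cube n) => ((σ.2 : Cube n))) hab
      exact Subtype.ext this
    calc (∑' Q' : gen P Q₀ (k+1), volume (Q' : Cube n).set)
        = ∑' Q' : gen P Q₀ (k+1),
            (fun σ : Σ Q : gen P Q₀ k, P (Q : Cube n) => volume (σ.2 : Cube n).set) (ι Q') := rfl
      _ ≤ ∑' σ : Σ Q : gen P Q₀ k, P (Q : Cube n), volume (σ.2 : Cube n).set :=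
          ENNReal.tsum_comp_le_tsum_of_injective hinj _
      _ = ∑' Q : gen P Q₀ k, ∑' Q' : P (Q : Cube n), volume (Q' : Cube n).set :=
          ENNReal.tsum_sigma' _
      _ ≤ ∑' Q : gen P Q₀ k, (1/2) * volume (Q : Cube n).set :=
          ENNReal.tsum_le_tsum (fun Q => hPsum _)
      _ = (1/2) * ∑' Q : gen P Q₀ k, volume (Q : Cube n).set := ENNReal.tsum_mul_left
      _ ≤ (1/2) * ((1/2)^k * volume Q₀.set) := mul_le_mul_right ih _
      _ = (1/2)^(k+1) * volume Q₀.set := by ring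

end Gen

/-- Suppose the recursive claim holds: for every cube `Q₀` there are pairwise
disjoint dyadic subcubes `P_j ∈ 𝒟(Q₀)` of total measure `≤ (1/2)|Q₀|` with
`|T(fχ_{3Q₀})| ≤ A ⟨|f|⟩_{3Q₀} + ∑_j |T(fχ_{3P_j})| χ_{P_j}` a.e. on `Q₀`. Then for every
cube `Q₀` there is a `1/2`-sparse family `ℱ ⊆ 𝒟(Q₀)` with
`|T(fχ_{3Q₀})(x)| ≤ 2A ∑_{Q∈ℱ} ⟨|f|⟩_{3Q} χ_Q(x)` a.e. on `Q₀`. -/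
theorem sparse_domination_by_iteration (n : ℕ)
    (T : ((Fin n → ℝ) → ℝ) → (Fin n → ℝ) → ℝ)
    (f : (Fin n → ℝ) → ℝ) (A : ℝ) (hA : 0 ≤ A)
    (hrec : ∀ Q₀ : Cube n, ∃ P : Set (Cube n), P.Countable ∧
      (∀ Q ∈ P, Q.IsDyadicIn Q₀) ∧ P.PairwiseDisjoint Cube.set ∧
      (∑' Q : P, volume (Q : Cube n).set) ≤ (1 / 2) * volume Q₀.set ∧
      ∀ᵐ x : Fin n → ℝ, x ∈ Q₀.set →
        (‖T (Q₀.triple.set.indicator f) x‖₊ : ℝ≥0∞) ≤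
          ENNReal.ofReal A * avgAbs f Q₀.triple +
            ∑' Q : P, ((Q : Cube n).set.indicator
              (fun y => (‖T ((Q : Cube n).triple.set.indicator f) y‖₊ : ℝ≥0∞)) x)) :
    ∀ Q₀ : Cube n, ∃ F : Set (Cube n), F.Countable ∧
      (∀ Q ∈ F, Q.IsDyadicIn Q₀) ∧ IsSparse (1 / 2) F ∧
      ∀ᵐ x : Fin n → ℝ, x ∈ Q₀.set →
        (‖T (Q₀.triple.set.indicator f) x‖₊ : ℝ≥0∞) ≤
          ENNReal.ofReal (2 * A) *
            ∑' Q : F, ((Q : Cube n).set.indicator (fun _ => avgAbs f (Q : Cube n).triple) x) := by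
  choose P hPcount hPdyad hPdisj hPsum hPae using hrec
  intro Q₀
  set F : Set (Cube n) := ⋃ k, gen P Q₀ k with hF
  have hgenF : ∀ k, gen P Q₀ k ⊆ F := fun k => Set.subset_iUnion (gen P Q₀) k
  have hFcount : F.Countable := Set.countable_iUnion (fun k => gen_countable hPcount k)
  refine ⟨F, hFcount, ?_, ?_, ?_⟩
  · -- dyadic
    intro Q hQ
    obtain ⟨k, hk⟩ := Set.mem_iUnion.mp hQ
    exact gen_dyadic hPdyad k Q hk
  · -- sparse
    classical
    refine ⟨fun Q => Q.set \ ⋃ Q' ∈ P Q, Cube.set Q', fun Q _ => ⟨Set.diff_subset, ?_, ?_⟩, ?_⟩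
    · exact Q.measurableSet_set_s5.diff
        (MeasurableSet.biUnion (hPcount Q) (fun Q' _ => Q'.measurableSet_set_s5))
    · -- measure lower bound
      have hU : volume (⋃ Q' ∈ P Q, Cube.set Q') ≤ (1/2) * volume Q.set :=
        le_trans (measure_biUnion_le volume (hPcount Q) _) (hPsum Q)
      have h1 : volume Q.set - volume (⋃ Q' ∈ P Q, Cube.set Q')
          ≤ volume (Q.set \ ⋃ Q' ∈ P Q, Cube.set Q') := le_measure_diff
      have h2 : volume Q.set - (1/2) * volume Q.set
          ≤ volume Q.set - volume (⋃ Q' ∈ P Q, Cube.set Q') := tsub_le_tsub_left hU _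
      have h3 : volume Q.set - (1/2) * volume Q.set = (1/2) * volume Q.set := by
        rw [one_div, ← ENNReal.div_eq_inv_mul, ENNReal.sub_half Q.volume_ne_top]
      have h4 : ENNReal.ofReal (1/2) = (1/2 : ℝ≥0∞) := by
        rw [ENNReal.ofReal_div_of_pos (by norm_num)]; norm_num
      rw [h4]
      calc (1/2 : ℝ≥0∞) * volume Q.set = volume Q.set - (1/2) * volume Q.set := h3.symm
        _ ≤ _ := h2.trans h1
    · -- pairwise disjoint E
      intro Q₁ hQ₁ Q₂ hQ₂ hne
      obtain ⟨k₁, hk₁⟩ := Set.mem_iUnion.mp hQ₁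
      obtain ⟨k₂, hk₂⟩ := Set.mem_iUnion.mp hQ₂
      -- key: for cubes at levels k₁ ≤ k₂
      have key : ∀ (R₁ R₂ : Cube n) (j₁ j₂ : ℕ), R₁ ∈ gen P Q₀ j₁ → R₂ ∈ gen P Q₀ j₂ →
          j₁ ≤ j₂ → R₁ ≠ R₂ →
          Disjoint (R₁.set \ ⋃ Q' ∈ P R₁, Cube.set Q') (R₂.set \ ⋃ Q' ∈ P R₂, Cube.set Q') := by
        intro R₁ R₂ j₁ j₂ hj₁ hj₂ hle hne'
        rcases Nat.eq_or_lt_of_le hle with h | h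
        · subst h
          exact Set.disjoint_of_subset Set.diff_subset Set.diff_subset
            (gen_pairwiseDisjoint hPdyad hPdisj j₁ hj₁ hj₂ hne')
        · obtain ⟨R, hR, Rc, hRc, hsub⟩ := gen_ancestor_strict hPdyad j₂ h R₂ hj₂
          by_cases hRR : R = R₁
          · subst hRR
            refine Set.disjoint_left.mpr (fun y hy₁ hy₂ => ?_)
            exact hy₁.2 (Set.mem_biUnion hRc (hsub hy₂.1))
          · have hdisj := gen_pairwiseDisjoint hPdyad hPdisj j₁ hR hj₁ hRR
            have hsub2 : R₂.set ⊆ R.set := hsub.trans (hPdyad R Rc hRc).subset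
            exact Set.disjoint_of_subset Set.diff_subset (Set.diff_subset.trans hsub2)
              hdisj.symm
      rcases le_or_gt k₁ k₂ with h | h
      · exact key Q₁ Q₂ k₁ k₂ hk₁ hk₂ h hne
      · exact (key Q₂ Q₁ k₂ k₁ hk₂ hk₁ h.le (Ne.symm hne)).symm
  · -- the a.e. estimate
    -- Borel-Cantelli
    set s : ℕ → Set (Fin n → ℝ) := fun k => ⋃ Q ∈ gen P Q₀ k, Cube.set Q with hs_def
    have hsum_ne_top : (∑' k, volume (s k)) ≠ ⊤ := by
      have hb : ∀ k, volume (s k) ≤ (1/2 : ℝ≥0∞)^k * volume Q₀.set := fun k =>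
        le_trans (measure_biUnion_le volume (gen_countable hPcount k) _) (gen_vol_le hPsum k)
      have : (∑' k, volume (s k)) ≤ ∑' k : ℕ, (1/2 : ℝ≥0∞)^k * volume Q₀.set :=
        ENNReal.tsum_le_tsum hb
      refine ne_top_of_le_ne_top ?_ this
      rw [ENNReal.tsum_mul_right, ENNReal.tsum_geometric]
      exact ENNReal.mul_ne_top (by norm_num) Q₀.volume_ne_top
    have hae1 : ∀ᵐ x : Fin n → ℝ, ∀ᶠ k in Filter.atTop, x ∉ s k :=
      ae_eventually_notMem hsum_ne_top
    have hae2 : ∀ᵐ x : Fin n → ℝ, ∀ Q : Cube n, Q ∈ F → x ∈ Q.set →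
        (‖T (Q.triple.set.indicator f) x‖₊ : ℝ≥0∞) ≤
          ENNReal.ofReal A * avgAbs f Q.triple +
            ∑' Q' : P Q, ((Q' : Cube n).set.indicator
              (fun y => (‖T ((Q' : Cube n).triple.set.indicator f) y‖₊ : ℝ≥0∞)) x) := by
      rw [MeasureTheory.ae_ball_iff hFcount]
      exact fun Q _ => hPae Q
    filter_upwards [hae1, hae2] with x hx1 hx2 hxQ₀
    obtain ⟨k, hk⟩ := (hx1.and (Filter.eventually_ge_atTop 0)).exists
    -- notation
    set g : Cube n → ℝ≥0∞ := fun Q =>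
      Q.set.indicator (fun y => (‖T (Q.triple.set.indicator f) y‖₊ : ℝ≥0∞)) x with hg
    set a : Cube n → ℝ≥0∞ := fun Q =>
      Q.set.indicator (fun _ => avgAbs f Q.triple) x with ha
    have claim : ∀ j : ℕ, (‖T (Q₀.triple.set.indicator f) x‖₊ : ℝ≥0∞) ≤
        ENNReal.ofReal A * (∑ i ∈ Finset.range j, ∑' Q : gen P Q₀ i, a Q)
          + ∑' Q : gen P Q₀ j, g Q := by
      intro j
      induction j with
      | zero =>
        simp only [Finset.range_zero, Finset.sum_empty, mul_zero, zero_add]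
        have : (∑' Q : gen P Q₀ 0, g Q) = g Q₀ := by
          simp only [gen]
          exact tsum_singleton Q₀ g
        rw [this]
        simp only [hg]
        rw [Set.indicator_of_mem hxQ₀]
      | succ j ih =>
        have step : (∑' Q : gen P Q₀ j, g Q) ≤
            ENNReal.ofReal A * (∑' Q : gen P Q₀ j, a Q) + ∑' Q : gen P Q₀ (j+1), g Q := by
          have hterm : ∀ Q : gen P Q₀ j, g (Q : Cube n) ≤
              ENNReal.ofReal A * a (Q : Cube n) +
                ∑' Q' : P (Q : Cube n), g (Q' : Cube n) := by
            rintro ⟨Q, hQ⟩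
            by_cases hxQ : x ∈ Q.set
            · have hb := hx2 Q (hgenF j hQ) hxQ
              simp only [hg, ha, Set.indicator_of_mem hxQ]
              exact hb
            · simp [hg, Set.indicator_of_notMem hxQ]
          calc (∑' Q : gen P Q₀ j, g (Q : Cube n))
              ≤ ∑' Q : gen P Q₀ j, (ENNReal.ofReal A * a (Q : Cube n) +
                  ∑' Q' : P (Q : Cube n), g (Q' : Cube n)) := ENNReal.tsum_le_tsum hterm
            _ = ENNReal.ofReal A * (∑' Q : gen P Q₀ j, a (Q : Cube n)) +
                  ∑' Q : gen P Q₀ j, ∑' Q' : P (Q : Cube n), g (Q' : Cube n) := by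
                rw [ENNReal.tsum_add, ENNReal.tsum_mul_left]
            _ ≤ ENNReal.ofReal A * (∑' Q : gen P Q₀ j, a (Q : Cube n)) +
                  ∑' Q : gen P Q₀ (j+1), g (Q : Cube n) := by
                gcongr
                rw [← ENNReal.tsum_sigma' (fun σ : Σ Q : gen P Q₀ j, P (Q :Cube n) => g (σ.2 : Cube n))]
                have hι : ∀ σ : Σ Q : gen P Q₀ j, P (Q : Cube n),
                    (σ.2 : Cube n) ∈ gen P Q₀ (j+1) := by
                  rintro ⟨⟨Q, hQ⟩, ⟨Q', hQ'⟩⟩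
                  rw [gen, Set.mem_iUnion₂]
                  exact ⟨Q, hQ, hQ'⟩
                have hinj : Function.Injective
                    (fun σ : Σ Q : gen P Q₀ j, P (Q : Cube n) =>
                      (⟨(σ.2 : Cube n), hι σ⟩ : gen P Q₀ (j+1))) := by
                  rintro ⟨⟨Q, hQ⟩, ⟨Q', hQ'⟩⟩ ⟨⟨R, hR⟩, ⟨R', hR'⟩⟩ hab
                  have hc : Q' = R' := congrArg Subtype.val hab
                  subst hc
                  have hQR : Q = R := gen_parent_unique hPdyad hPdisj hQ hR hQ' hR'
                  subst hQR
                  rfl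
                exact ENNReal.tsum_comp_le_tsum_of_injective hinj (fun Q => g (Q : Cube n))
        calc (‖T (Q₀.triple.set.indicator f) x‖₊ : ℝ≥0∞)
            ≤ ENNReal.ofReal A * (∑ i ∈ Finset.range j, ∑' Q : gen P Q₀ i, a Q)
              + ∑' Q : gen P Q₀ j, g Q := ih
          _ ≤ ENNReal.ofReal A * (∑ i ∈ Finset.range j, ∑' Q : gen P Q₀ i, a Q)
              + (ENNReal.ofReal A * (∑' Q : gen P Q₀ j, a Q) + ∑' Q : gen P Q₀ (j+1), g Q) := by
              gcongr
          _ = ENNReal.ofReal A * (∑ i ∈ Finset.range (j+1), ∑' Q : gen P Q₀ i, a Q)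
              + ∑' Q : gen P Q₀ (j+1), g Q := by
              rw [Finset.sum_range_succ, mul_add]
              ring
    -- at level k the remainder vanishes
    have hRk : (∑' Q : gen P Q₀ k, g Q) = 0 := by
      rw [ENNReal.tsum_eq_zero]
      rintro ⟨Q, hQ⟩
      have hxQ : x ∉ Q.set := fun hxQ => hk.1 (Set.mem_biUnion hQ hxQ)
      simp [hg, Set.indicator_of_notMem hxQ]
    have hmain : (‖T (Q₀.triple.set.indicator f) x‖₊ : ℝ≥0∞) ≤
        ENNReal.ofReal A * (∑ i ∈ Finset.range k, ∑' Q : gen P Q₀ i, a Q) := by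
      have := claim k
      rwa [hRk, add_zero] at this
    -- partial sums bounded by total sum over F
    have hle : (∑ i ∈ Finset.range k, ∑' Q : gen P Q₀ i, a Q) ≤ ∑' Q : F, a (Q : Cube n) := by
      calc (∑ i ∈ Finset.range k, ∑' Q : gen P Q₀ i, a Q)
          ≤ ∑' i : ℕ, ∑' Q : gen P Q₀ i, a Q := ENNReal.sum_le_tsum _
        _ = ∑' σ : Σ i : ℕ, gen P Q₀ i, a (σ.2 : Cube n) :=
            (ENNReal.tsum_sigma' (fun σ : Σ i : ℕ, gen P Q₀ i => a (σ.2 : Cube n))).symm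
        _ ≤ ∑' Q : F, a (Q : Cube n) := by
            have hι : ∀ σ : Σ i : ℕ, gen P Q₀ i, (σ.2 : Cube n) ∈ F := by
              rintro ⟨i, ⟨Q, hQ⟩⟩
              exact Set.mem_iUnion.mpr ⟨i, hQ⟩
            have hinj : Function.Injective
                (fun σ : Σ i : ℕ, gen P Q₀ i => (⟨(σ.2 : Cube n), hι σ⟩ : F)) := by
              rintro ⟨i, ⟨Q, hQ⟩⟩ ⟨i', ⟨Q', hQ'⟩⟩ hab
              have hc : Q = Q' := congrArg Subtype.val hab
              subst hc
              have : i = i' := gen_level_unique hPdyad hPdisj hPsum hQ hQ'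
              subst this
              rfl
            exact ENNReal.tsum_comp_le_tsum_of_injective hinj (fun Q => a (Q : Cube n))
    calc (‖T (Q₀.triple.set.indicator f) x‖₊ : ℝ≥0∞)
        ≤ ENNReal.ofReal A * (∑ i ∈ Finset.range k, ∑' Q : gen P Q₀ i, a Q) := hmain
      _ ≤ ENNReal.ofReal A * ∑' Q : F, a (Q : Cube n) := mul_le_mul_right hle _
      _ ≤ ENNReal.ofReal (2 * A) * ∑' Q : F, a (Q : Cube n) :=
          mul_le_mul_left (ENNReal.ofReal_le_ofReal (by linarith)) _
end
end

section
/- Let w be a weight on ℝⁿ, 1 < p < ∞, and let 𝒮 be a family of cubes with pairwise disjoint measurable subsets E_Q ⊆ Q. Then for every nonnegative g, ∑_{Q∈𝒮} ((1/w(3Q)) ∫_Q g)^{p'} w(E_Q) ≤ c_{n,p} ‖g‖_{L^{p'}(σ)}^{p'}, where σ = w^{-1/(p−1)} and p' = p/(p−1). -/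
/-!
Put `μ = w dx` and `f = g / w`. Then `w(3Q)⁻¹ ∫_Q g = μ(3Q)⁻¹ ∫_Q f dμ`, and for every `x ∈ Q`
the closed ball of radius `ℓ(Q)` about `x` lies between `Q` and `3Q`, so this average is at most
the centered maximal function `M_μ f (x)`. Each term of the sum is therefore at most
`∫_{E_Q} (M_μ f)^{p'} dμ`, and by disjointness the sum is at most `∫ (M_μ f)^{p'} dμ`.
The Besicovitch covering theorem bounds `M_μ` from `L¹(μ)` to weak `L¹(μ)` with a constant that
does not depend on `μ`; splitting `f` at the dyadic heights `2^k` and summing a geometric series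
upgrades this to a bound on `L^{p'}(μ)`, and `∫ f^{p'} dμ = ∫ g^{p'} σ`.
-/

noncomputable section
open MeasureTheory ENNReal Set

open Metric Function
open scoped NNReal

namespace ENNReal

lemma two_mul_two_rpow (x : ℝ) : 2 * (2 : ℝ≥0∞) ^ x = 2 ^ (x + 1) := by
  rw [rpow_add _ _ two_ne_zero ofNat_ne_top, rpow_one, mul_comm]

lemma four_mul_two_rpow (x : ℝ) : 4 * (2 : ℝ≥0∞) ^ x = 2 ^ (x + 2) := by
  rw [show (4 : ℝ≥0∞) = 2 * 2 by norm_num, mul_assoc, two_mul_two_rpow, two_mul_two_rpow,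
    add_assoc, one_add_one_eq_two]

lemma exists_two_mul_two_rpow_lt_le {a : ℝ≥0∞} (ha₀ : a ≠ 0) (ha : a ≠ ⊤) :
    ∃ k : ℤ, 2 * 2 ^ (k : ℝ) < a ∧ a ≤ 4 * 2 ^ (k : ℝ) := by
  have hr : 0 < a.toNNReal := toNNReal_pos ha₀ ha
  have hcast (m : ℤ) : (2 : ℝ≥0∞) ^ (m : ℝ) = ((2 ^ m : ℝ≥0) : ℝ≥0∞) := by
    rw [rpow_intCast, coe_zpow two_ne_zero, coe_ofNat]
  set j := Int.clog 2 a.toNNReal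
  refine ⟨j - 2, ?_, ?_⟩
  · have h := Int.zpow_pred_clog_lt_self (R := ℝ≥0) (b := 2) (by norm_num) hr
    rw [two_mul_two_rpow, show ((j - 2 : ℤ) : ℝ) + 1 = ((j - 1 : ℤ) : ℝ) by push_cast; ring,
      hcast, ← coe_toNNReal ha, coe_lt_coe]
    exact_mod_cast h
  · have h := Int.self_le_zpow_clog (R := ℝ≥0) (b := 2) (by norm_num) a.toNNReal
    rw [four_mul_two_rpow, show ((j - 2 : ℤ) : ℝ) + 2 = (j : ℝ) by push_cast; ring,
      hcast, ← coe_toNNReal ha, coe_le_coe]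
    exact_mod_cast h

lemma rpow_sub_one_mul {β : ℝ} (hβ : 1 ≤ β) (a : ℝ≥0∞) : a ^ (β - 1) * a = a ^ β := by
  conv_rhs => rw [← sub_add_cancel β 1, rpow_add_of_nonneg _ _ (sub_nonneg.2 hβ) zero_le_one,
    rpow_one]

lemma rpow_le_tsum_two_rpow {β : ℝ} (hβ : 0 < β) (a : ℝ≥0∞) :
    a ^ β ≤ ∑' k : ℤ, if 2 * 2 ^ (k : ℝ) < a then (4 * 2 ^ (k : ℝ)) ^ β else 0 := by
  rcases eq_or_ne a 0 with rfl | ha₀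
  · simp [zero_rpow_of_pos hβ]
  rcases eq_or_ne a ⊤ with rfl | ha
  · rw [top_rpow_of_pos hβ]
    refine (tsum_const_eq_top_of_ne_zero (α := ℕ) one_ne_zero).symm.le.trans <|
      le_trans (ENNReal.tsum_le_tsum fun m => ?_)
      (tsum_comp_le_tsum_of_injective Nat.cast_injective _)
    rw [if_pos (mul_lt_top ofNat_lt_top (rpow_lt_top_of_nonneg (by positivity) ofNat_ne_top))]
    refine one_le_rpow ?_ hβ
    rw [four_mul_two_rpow]
    exact one_le_rpow (by norm_num) (by positivity)
  obtain ⟨k, hk, hak⟩ := exists_two_mul_two_rpow_lt_le ha₀ ha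
  calc a ^ β ≤ (4 * 2 ^ (k : ℝ)) ^ β := rpow_le_rpow hak hβ.le
    _ = if 2 * 2 ^ (k : ℝ) < a then (4 * 2 ^ (k : ℝ)) ^ β else 0 := (if_pos hk).symm
    _ ≤ _ := ENNReal.le_tsum k

lemma tsum_two_rpow_lt_le {q : ℝ} (hq : 0 < q) (a : ℝ≥0∞) :
    ∑' k : ℤ, (if 2 ^ (k : ℝ) < a then (2 ^ (k : ℝ)) ^ q else 0) ≤ (1 - 2 ^ (-q))⁻¹ * a ^ q := by
  rcases eq_or_ne a 0 with rfl | ha₀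
  · simp
  rcases eq_or_ne a ⊤ with rfl | ha
  · rw [top_rpow_of_pos hq, mul_top (ENNReal.inv_ne_zero.2 (sub_ne_top one_ne_top))]
    exact le_top
  obtain ⟨k₀, hk₀, hak₀⟩ := exists_two_mul_two_rpow_lt_le ha₀ ha
  set K := k₀ + 1
  have hK : (2 : ℝ≥0∞) ^ (K : ℝ) < a := by rwa [Int.cast_add, Int.cast_one, ← two_mul_two_rpow]
  have hle_K {k : ℤ} (hk : (2 : ℝ≥0∞) ^ (k : ℝ) < a) : k ≤ K := by
    by_contra! hKk
    refine (hk.trans_le hak₀).not_ge ?_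
    rw [four_mul_two_rpow]
    refine rpow_le_rpow_of_exponent_le one_le_two ?_
    exact_mod_cast (show k₀ + 2 ≤ k by omega)
  set F : ℤ → ℝ≥0∞ := fun k => if 2 ^ (k : ℝ) < a then (2 ^ (k : ℝ)) ^ q else 0
  have hsupp : support F ⊆ range fun j : ℕ => K - j := by
    intro k hk
    have hka : (2 : ℝ≥0∞) ^ (k : ℝ) < a := by
      by_contra h
      exact hk (if_neg h)
    have := hle_K hka
    exact ⟨(K - k).toNat, show K - ((K - k).toNat : ℤ) = k by omega⟩
  have hterm (j : ℕ) : F (K - j) ≤ (2 ^ (K : ℝ)) ^ q * (2 ^ (-q)) ^ j := by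
    refine (ite_le_sup _ _ _).trans (sup_le (le_of_eq ?_) zero_le)
    rw [← rpow_natCast, ← rpow_mul, ← rpow_mul, ← rpow_mul,
      ← rpow_add _ _ two_ne_zero ofNat_ne_top]
    push_cast
    ring_nf
  have hinj : Injective fun j : ℕ => K - j := fun i j h => by simpa using h
  calc ∑' k : ℤ, F k = ∑' j : ℕ, F (K - j) := (hinj.tsum_eq hsupp).symm
    _ ≤ ∑' j : ℕ, (2 ^ (K : ℝ)) ^ q * (2 ^ (-q)) ^ j := ENNReal.tsum_le_tsum hterm
    _ = (2 ^ (K : ℝ)) ^ q * (1 - 2 ^ (-q))⁻¹ := by rw [ENNReal.tsum_mul_left, tsum_geometric]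
    _ ≤ (1 - 2 ^ (-q))⁻¹ * a ^ q := by
        rw [mul_comm]
        gcongr

end ENNReal

section Lebesgue

variable {α : Type*} [MeasurableSpace α] {ν : Measure α} {h : α → ℝ≥0∞}

lemma lintegral_tsum_indicator_const_le {ι : Type*} [Countable ι] (μ : Measure α)
    (s : ι → Set α) (c : ι → ℝ≥0∞) :
    ∫⁻ x, ∑' i, (s i).indicator (fun _ => c i) x ∂μ ≤ ∑' i, c i * μ (s i) := by
  calc ∫⁻ x, ∑' i, (s i).indicator (fun _ => c i) x ∂μ
      ≤ ∫⁻ x, ∑' i, (toMeasurable μ (s i)).indicator (fun _ => c i) x ∂μ :=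
        lintegral_mono fun x => ENNReal.tsum_le_tsum fun i =>
          indicator_le_indicator_of_subset (subset_toMeasurable μ _) (fun _ => zero_le) x
    _ = ∑' i, c i * μ (s i) := by
        rw [lintegral_tsum fun i =>
          (measurable_const.indicator (measurableSet_toMeasurable μ _)).aemeasurable]
        simp_rw [lintegral_indicator_const (measurableSet_toMeasurable μ _), measure_toMeasurable]

lemma tsum_setLIntegral_le_lintegral {ι : Type*} (μ : Measure α)
    {s : ι → Set α} (hs : ∀ i, MeasurableSet (s i)) (hd : Pairwise (Disjoint on s))
    (f : α → ℝ≥0∞) : ∑' i, ∫⁻ x in s i, f x ∂μ ≤ ∫⁻ x, f x ∂μ := by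
  simpa only [withDensity_apply _ (hs _), withDensity_apply _ MeasurableSet.univ,
    Measure.restrict_univ] using
    (tsum_meas_le_meas_iUnion_of_disjoint (μ.withDensity f) hs hd).trans
      (measure_mono (subset_univ _))

lemma setLIntegral_div_withDensity (hh : Measurable h) (hh₀ : ∀ᵐ x ∂ν, h x ≠ 0)
    (hh_top : ∀ᵐ x ∂ν, h x ≠ ⊤) (g : α → ℝ≥0∞) {s : Set α} (hs : MeasurableSet s) :
    ∫⁻ x in s, g x / h x ∂ν.withDensity h = ∫⁻ x in s, g x ∂ν := by
  rw [setLIntegral_withDensity_eq_setLIntegral_mul_non_measurable _ hh _ hs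
    (ae_restrict_of_ae (hh_top.mono fun _ hx => hx.lt_top))]
  refine lintegral_congr_ae (ae_restrict_of_ae ?_)
  filter_upwards [hh₀, hh_top] with x hx₀ hx_top using ENNReal.mul_div_cancel hx₀ hx_top

lemma lintegral_div_rpow_withDensity (hh : Measurable h) (hh₀ : ∀ᵐ x ∂ν, h x ≠ 0)
    (hh_top : ∀ᵐ x ∂ν, h x ≠ ⊤) (g : α → ℝ≥0∞) {β : ℝ} (hβ : 0 ≤ β) :
    ∫⁻ x, (g x / h x) ^ β ∂ν.withDensity h = ∫⁻ x, g x ^ β * h x ^ (1 - β) ∂ν := by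
  rw [lintegral_withDensity_eq_lintegral_mul_non_measurable _ hh
    (hh_top.mono fun _ hx => hx.lt_top)]
  refine lintegral_congr_ae ?_
  filter_upwards [hh₀, hh_top] with x hx₀ hx_top
  rw [Pi.mul_apply, div_eq_mul_inv, mul_rpow_of_nonneg _ _ hβ, inv_rpow, ← rpow_neg,
    mul_left_comm, sub_eq_add_neg, rpow_add _ _ hx₀ hx_top, rpow_one]

end Lebesgue

section Maximal

variable {α : Type*} [MetricSpace α] [MeasurableSpace α]

def centeredMaximalFunction (μ : Measure α) (f : α → ℝ≥0∞) (x : α) : ℝ≥0∞ :=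
  ⨆ (r : ℝ) (_ : 0 < r), (μ (closedBall x r))⁻¹ * ∫⁻ y in closedBall x r, f y ∂μ

variable {μ : Measure α} {f g : α → ℝ≥0∞}

lemma le_centeredMaximalFunction (x : α) {r : ℝ} (hr : 0 < r) :
    (μ (closedBall x r))⁻¹ * ∫⁻ y in closedBall x r, f y ∂μ ≤ centeredMaximalFunction μ f x :=
  le_iSup₂ (f := fun r (_ : 0 < r) => (μ (closedBall x r))⁻¹ * ∫⁻ y in closedBall x r, f y ∂μ) r hr

lemma centeredMaximalFunction_mono (hfg : f ≤ g) :
    centeredMaximalFunction μ f ≤ centeredMaximalFunction μ g := fun _ =>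
  iSup₂_mono fun _ _ => mul_le_mul_right (lintegral_mono fun y => hfg y) _

lemma centeredMaximalFunction_add_const_le (c : ℝ≥0∞) (x : α) :
    centeredMaximalFunction μ (fun y => f y + c) x ≤ centeredMaximalFunction μ f x + c := by
  refine iSup₂_le fun r hr => ?_
  rw [lintegral_add_right _ measurable_const, setLIntegral_const, mul_add, mul_left_comm]
  gcongr
  · exact le_centeredMaximalFunction x hr
  · exact mul_le_of_le_one_right zero_le (ENNReal.inv_mul_le_one _)

variable [SecondCountableTopology α] [OpensMeasurableSpace α]

lemma measure_le_mul_of_forall_exists_closedBall {N : ℕ} {τ : ℝ} (hτ : 1 < τ)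
    (hN : IsEmpty (Besicovitch.SatelliteConfig α N τ)) (μ ν : Measure α) {s : Set α} {R : ℝ}
    (h : ∀ x ∈ s, ∃ r ∈ Ioc 0 R, μ (closedBall x r) ≤ ν (closedBall x r)) :
    μ s ≤ N * ν univ := by
  choose! r hr hμν using h
  let balls : Besicovitch.BallPackage s α :=
    { c := (↑)
      r := fun x => r x
      rpos := fun x => (hr x x.2).1
      r_bound := R
      r_le := fun x => (hr x x.2).2 }
  obtain ⟨u, hu, hcover⟩ := Besicovitch.exist_disjoint_covering_families hτ hN balls
  have hfamily (i : Fin N) : μ (⋃ j ∈ u i, ball (j : α) (r j)) ≤ ν univ := by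
    have hu_count : (u i).Countable := (hu i).countable_of_nonempty_interior fun j _ =>
      ⟨j, ball_subset_interior_closedBall (mem_ball_self (hr j j.2).1)⟩
    calc μ (⋃ j ∈ u i, ball (j : α) (r j))
        ≤ μ (⋃ j ∈ u i, closedBall (j : α) (r j)) :=
          measure_mono (iUnion₂_mono fun _ _ => ball_subset_closedBall)
      _ ≤ ∑' j : u i, μ (closedBall (j : α) (r j)) := measure_biUnion_le μ hu_count _
      _ ≤ ∑' j : u i, ν (closedBall (j : α) (r j)) :=
          ENNReal.tsum_le_tsum fun j => hμν j.1.1 j.1.2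
      _ = ν (⋃ j ∈ u i, closedBall (j : α) (r j)) :=
          (measure_biUnion hu_count (hu i) fun _ _ => measurableSet_closedBall).symm
      _ ≤ ν univ := measure_mono (subset_univ _)
  calc μ s = μ (range balls.c) := by rw [Subtype.range_val]
    _ ≤ μ (⋃ i, ⋃ j ∈ u i, ball (j : α) (r j)) := measure_mono hcover
    _ ≤ ∑ i, μ (⋃ j ∈ u i, ball (j : α) (r j)) := measure_iUnion_fintype_le μ _
    _ ≤ ∑ _i : Fin N, ν univ := Finset.sum_le_sum fun i _ => hfamily i
    _ = N * ν univ := by simp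

lemma mul_measure_lt_centeredMaximalFunction_le {N : ℕ} {τ : ℝ} (hτ : 1 < τ)
    (hN : IsEmpty (Besicovitch.SatelliteConfig α N τ)) (μ : Measure α) (f : α → ℝ≥0∞)
    (t : ℝ≥0∞) : t * μ {x | t < centeredMaximalFunction μ f x} ≤ N * ∫⁻ x, f x ∂μ := by
  -- Besicovitch needs a bound on the radii, so exhaust the level set by radii `≤ R`, `R ∈ ℕ`.
  set s : ℕ → Set α := fun R => {x | ∃ r ∈ Ioc 0 (R : ℝ),
    t * μ (closedBall x r) ≤ ∫⁻ y in closedBall x r, f y ∂μ}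
  have hs_mono : Monotone s := fun R R' hRR' x ⟨r, hr, hx⟩ =>
    ⟨r, ⟨hr.1, hr.2.trans (Nat.cast_le.2 hRR')⟩, hx⟩
  have hs_cover : {x | t < centeredMaximalFunction μ f x} ⊆ ⋃ R, s R := by
    intro x hx
    change t < ⨆ (r : ℝ) (_ : 0 < r), _ at hx
    obtain ⟨r, hx⟩ := lt_iSup_iff.1 hx
    obtain ⟨hr, hx⟩ := lt_iSup_iff.1 hx
    refine mem_iUnion.2 ⟨⌈r⌉₊, r, ⟨hr, Nat.le_ceil r⟩, mul_le_of_le_div ?_⟩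
    rw [div_eq_mul_inv, mul_comm]
    exact hx.le
  have hs_le (R : ℕ) : t * μ (s R) ≤ N * ∫⁻ x, f x ∂μ := by
    have := measure_le_mul_of_forall_exists_closedBall hτ hN (t • μ) (μ.withDensity f)
      (s := s R) fun x ⟨r, hr, hx⟩ => ⟨r, hr, by
        rwa [Measure.smul_apply, smul_eq_mul, withDensity_apply _ measurableSet_closedBall]⟩
    rwa [Measure.smul_apply, smul_eq_mul, withDensity_apply _ MeasurableSet.univ,
      Measure.restrict_univ] at this
  calc t * μ {x | t < centeredMaximalFunction μ f x} ≤ t * μ (⋃ R, s R) := by gcongr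
    _ = ⨆ R, t * μ (s R) := by rw [hs_mono.measure_iUnion, ENNReal.mul_iSup]
    _ ≤ N * ∫⁻ x, f x ∂μ := iSup_le hs_le

lemma mul_measure_two_mul_lt_centeredMaximalFunction_le {N : ℕ} {τ : ℝ} (hτ : 1 < τ)
    (hN : IsEmpty (Besicovitch.SatelliteConfig α N τ)) (μ : Measure α) {f : α → ℝ≥0∞}
    (hf : Measurable f) (t : ℝ≥0∞) :
    t * μ {x | 2 * t < centeredMaximalFunction μ f x} ≤ N * ∫⁻ x in {x | t < f x}, f x ∂μ := by
  rcases eq_or_ne t ⊤ with rfl | ht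
  · simp
  set f_t := {x | t < f x}.indicator f
  have hf_le : f ≤ fun x => f_t x + t := fun x => by
    by_cases hx : t < f x <;> simp [f_t, hx, le_of_not_gt]
  have hsub : {x | 2 * t < centeredMaximalFunction μ f x} ⊆
      {x | t < centeredMaximalFunction μ f_t x} := fun x (hx : 2 * t < _) => by
    have := hx.trans_le ((centeredMaximalFunction_mono hf_le x).trans
      (centeredMaximalFunction_add_const_le t x))
    rw [two_mul] at this
    exact (ENNReal.add_lt_add_iff_right ht).1 this
  calc t * μ {x | 2 * t < centeredMaximalFunction μ f x}
      ≤ t * μ {x | t < centeredMaximalFunction μ f_t x} := by gcongr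
    _ ≤ N * ∫⁻ x, f_t x ∂μ := mul_measure_lt_centeredMaximalFunction_le hτ hN μ f_t t
    _ = N * ∫⁻ x in {x | t < f x}, f x ∂μ := by
        rw [lintegral_indicator (measurableSet_lt measurable_const hf)]

lemma lintegral_centeredMaximalFunction_rpow_le {N : ℕ} {τ : ℝ} (hτ : 1 < τ)
    (hN : IsEmpty (Besicovitch.SatelliteConfig α N τ)) {β : ℝ} (hβ : 1 < β) (μ : Measure α)
    {f : α → ℝ≥0∞} (hf : Measurable f) :
    ∫⁻ x, centeredMaximalFunction μ f x ^ β ∂μ ≤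
      N * 4 ^ β * (1 - 2 ^ (1 - β))⁻¹ * ∫⁻ x, f x ^ β ∂μ := by
  set Mf := centeredMaximalFunction μ f
  set t : ℤ → ℝ≥0∞ := fun k => 2 ^ (k : ℝ)
  have hlevel (k : ℤ) : (4 * t k) ^ β * μ {x | 2 * t k < Mf x} ≤
      4 ^ β * N * ∫⁻ x, {x | t k < f x}.indicator (fun x => t k ^ (β - 1) * f x) x ∂μ := by
    rw [lintegral_indicator (measurableSet_lt measurable_const hf), lintegral_const_mul _ hf,
      mul_rpow_of_nonneg _ _ (by linarith), ← rpow_sub_one_mul hβ.le (t k)]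
    calc 4 ^ β * (t k ^ (β - 1) * t k) * μ {x | 2 * t k < Mf x}
        = 4 ^ β * t k ^ (β - 1) * (t k * μ {x | 2 * t k < Mf x}) := by ring
      _ ≤ 4 ^ β * t k ^ (β - 1) * (N * ∫⁻ x in {x | t k < f x}, f x ∂μ) :=
          mul_le_mul_right (mul_measure_two_mul_lt_centeredMaximalFunction_le hτ hN μ hf (t k)) _
      _ = 4 ^ β * N * (t k ^ (β - 1) * ∫⁻ x in {x | t k < f x}, f x ∂μ) := by ring
  have hpointwise (x : α) :
      ∑' k, {x | t k < f x}.indicator (fun x => t k ^ (β - 1) * f x) x ≤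
        (1 - 2 ^ (1 - β))⁻¹ * f x ^ β := by
    calc ∑' k, {x | t k < f x}.indicator (fun x => t k ^ (β - 1) * f x) x
        = (∑' k, if t k < f x then t k ^ (β - 1) else 0) * f x := by
          rw [← ENNReal.tsum_mul_right]
          refine tsum_congr fun k => ?_
          simp only [indicator_apply, mem_ofPred_eq, ite_mul, zero_mul]
      _ ≤ (1 - 2 ^ (-(β - 1)))⁻¹ * f x ^ (β - 1) * f x := by
          gcongr
          exact tsum_two_rpow_lt_le (by linarith) (f x)
      _ = (1 - 2 ^ (1 - β))⁻¹ * f x ^ β := by rw [neg_sub, mul_assoc, rpow_sub_one_mul hβ.le]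
  -- the superlevel sets of `Mf` need not be measurable
  calc ∫⁻ x, Mf x ^ β ∂μ
      ≤ ∫⁻ x, ∑' k, {x | 2 * t k < Mf x}.indicator (fun _ => (4 * t k) ^ β) x ∂μ := by
        refine lintegral_mono fun x => (rpow_le_tsum_two_rpow (by linarith) (Mf x)).trans_eq ?_
        simp only [indicator_apply, mem_ofPred_eq, t]
    _ ≤ ∑' k, (4 * t k) ^ β * μ {x | 2 * t k < Mf x} := lintegral_tsum_indicator_const_le _ _ _
    _ ≤ ∑' k, 4 ^ β * N *
          ∫⁻ x, {x | t k < f x}.indicator (fun x => t k ^ (β - 1) * f x) x ∂μ :=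
        ENNReal.tsum_le_tsum hlevel
    _ = 4 ^ β * N *
          ∫⁻ x, ∑' k, {x | t k < f x}.indicator (fun x => t k ^ (β - 1) * f x) x ∂μ := by
        rw [ENNReal.tsum_mul_left, ← lintegral_tsum fun k => ((hf.const_mul _).indicator
          (measurableSet_lt measurable_const hf)).aemeasurable]
    _ ≤ 4 ^ β * N * ∫⁻ x, (1 - 2 ^ (1 - β))⁻¹ * f x ^ β ∂μ := by
        gcongr with x
        exact hpointwise x
    _ = N * 4 ^ β * (1 - 2 ^ (1 - β))⁻¹ * ∫⁻ x, f x ^ β ∂μ := by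
        rw [lintegral_const_mul _ (hf.pow_const β)]
        ring

end Maximal

namespace Cube

variable {n : ℕ} (Q : Cube n)

lemma measurableSet_set_s10 : MeasurableSet Q.set := by
  have : Q.set = univ.pi fun i => Ico (Q.corner i) (Q.corner i + Q.side) := by
    ext x
    simp [Cube.set]
  rw [this]
  exact .univ_pi fun _ => measurableSet_Ico

variable {Q} {x : Fin n → ℝ}

lemma set_subset_closedBall (hx : x ∈ Q.set) : Q.set ⊆ closedBall x Q.side := by
  intro y hy
  rw [mem_closedBall, dist_pi_le_iff Q.side_pos.le]
  intro i
  obtain ⟨hy₁, hy₂⟩ := hy i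
  obtain ⟨hx₁, hx₂⟩ := hx i
  rw [Real.dist_eq, abs_le]
  constructor <;> linarith

lemma closedBall_subset_triple_set (hx : x ∈ Q.set) : closedBall x Q.side ⊆ Q.triple.set := by
  intro y hy i
  have hyx := (dist_le_pi_dist y x i).trans (mem_closedBall.1 hy)
  rw [Real.dist_eq, abs_le] at hyx
  obtain ⟨hx₁, hx₂⟩ := hx i
  simp only [Cube.triple]
  constructor <;> linarith

lemma inv_measure_triple_mul_setLIntegral_le_centeredMaximalFunction
    (μ : Measure (Fin n → ℝ)) (f : (Fin n → ℝ) → ℝ≥0∞) (hx : x ∈ Q.set) :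
    (μ Q.triple.set)⁻¹ * ∫⁻ y in Q.set, f y ∂μ ≤ centeredMaximalFunction μ f x :=
  calc (μ Q.triple.set)⁻¹ * ∫⁻ y in Q.set, f y ∂μ
      ≤ (μ (closedBall x Q.side))⁻¹ * ∫⁻ y in closedBall x Q.side, f y ∂μ := by
        gcongr
        · exact closedBall_subset_triple_set hx
        · exact set_subset_closedBall hx
    _ ≤ centeredMaximalFunction μ f x := le_centeredMaximalFunction x Q.side_pos

lemma tsum_rpow_mul_measure_le {N : ℕ} {τ : ℝ} (hτ : 1 < τ)
    (hN : IsEmpty (Besicovitch.SatelliteConfig (Fin n → ℝ) N τ)) {β : ℝ} (hβ : 1 < β)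
    (μ : Measure (Fin n → ℝ)) {S : Set (Cube n)} {E : Cube n → Set (Fin n → ℝ)}
    (hES : ∀ Q ∈ S, E Q ⊆ Q.set) (hE : ∀ Q ∈ S, MeasurableSet (E Q))
    (hdisj : S.PairwiseDisjoint E) {f : (Fin n → ℝ) → ℝ≥0∞} (hf : Measurable f) :
    ∑' Q : S, ((μ (Q : Cube n).triple.set)⁻¹ * ∫⁻ x in (Q : Cube n).set, f x ∂μ) ^ β * μ (E Q) ≤
      N * 4 ^ β * (1 - 2 ^ (1 - β))⁻¹ * ∫⁻ x, f x ^ β ∂μ := by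
  have hterm (Q : S) : ((μ (Q : Cube n).triple.set)⁻¹ * ∫⁻ x in (Q : Cube n).set, f x ∂μ) ^ β *
      μ (E Q) ≤ ∫⁻ x in E Q, centeredMaximalFunction μ f x ^ β ∂μ :=
    (setLIntegral_const _ _).symm.trans_le <| setLIntegral_mono' (hE Q Q.2) fun x hx =>
      rpow_le_rpow (inv_measure_triple_mul_setLIntegral_le_centeredMaximalFunction μ f
        (hES Q Q.2 hx)) (by linarith)
  calc _ ≤ ∑' Q : S, ∫⁻ x in E Q, centeredMaximalFunction μ f x ^ β ∂μ :=
        ENNReal.tsum_le_tsum hterm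
    _ ≤ ∫⁻ x, centeredMaximalFunction μ f x ^ β ∂μ :=
        tsum_setLIntegral_le_lintegral μ (fun Q : S => hE Q Q.2)
          (fun (Q Q' : S) hQQ' => hdisj Q.2 Q'.2 (Subtype.coe_injective.ne hQQ')) _
    _ ≤ _ := lintegral_centeredMaximalFunction_rpow_le hτ hN hβ μ hf

end Cube

/-- for a weight `w` on `ℝⁿ`, `1 < p < ∞`, and a family `𝒮` of cubes with
pairwise disjoint measurable subsets `E_Q ⊆ Q`, every nonnegative `g` satisfies
`∑_{Q∈𝒮} ((1/w(3Q)) ∫_Q g)^{p'} w(E_Q) ≤ c_{n,p} ‖g‖_{L^{p'}(σ)}^{p'}`,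
where `σ = w^{-1/(p-1)}` and `p' = p/(p-1)`. -/
theorem sparse_dual_sum_estimate (n : ℕ) (p : ℝ) (hp : 1 < p) :
    ∃ c : ℝ, 0 < c ∧
      ∀ (w : (Fin n → ℝ) → ℝ), Measurable w → (∀ᵐ x : Fin n → ℝ, 0 < w x) →
        LocallyIntegrable w →
      ∀ (S : Set (Cube n)) (E : Cube n → Set (Fin n → ℝ)),
        (∀ Q ∈ S, E Q ⊆ Q.set) → (∀ Q ∈ S, MeasurableSet (E Q)) →
        S.PairwiseDisjoint E →
      ∀ (g : (Fin n → ℝ) → ℝ≥0∞), Measurable g →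
        ∑' Q : S,
          (((∫⁻ x in (Q : Cube n).triple.set, ENNReal.ofReal (w x))⁻¹ *
              ∫⁻ x in (Q : Cube n).set, g x) ^ (p / (p - 1)) *
            ∫⁻ x in E Q, ENNReal.ofReal (w x)) ≤
        ENNReal.ofReal c *
          ∫⁻ x, g x ^ (p / (p - 1)) * ENNReal.ofReal (w x ^ (-(1 / (p - 1)))) := by
  obtain ⟨N, τ, hτ, hN⟩ := HasBesicovitchCovering.no_satelliteConfig (α := Fin n → ℝ)
  set β := p / (p - 1)
  have hβ : 1 < β := by rw [one_lt_div (by linarith)]; linarith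
  set C : ℝ≥0∞ := N * 4 ^ β * (1 - 2 ^ (1 - β))⁻¹
  have hC : C ≠ ⊤ := mul_ne_top (mul_ne_top (natCast_ne_top N)
    (rpow_ne_top_of_nonneg (by linarith) ofNat_ne_top)) (inv_ne_top.2 (tsub_pos_iff_lt.2
    (rpow_lt_one_of_one_lt_of_neg one_lt_two (by linarith))).ne')
  refine ⟨C.toReal + 1, by positivity, fun w hw hw_pos _ S E hES hE hdisj g hg => ?_⟩
  set h : (Fin n → ℝ) → ℝ≥0∞ := fun x => ENNReal.ofReal (w x)
  have hh : Measurable h := hw.ennreal_ofReal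
  have hh₀ : ∀ᵐ x, h x ≠ 0 := hw_pos.mono fun x hx => (ofReal_pos.2 hx).ne'
  have hh_top : ∀ᵐ x, h x ≠ ⊤ := ae_of_all _ fun x => ofReal_ne_top
  set μ := volume.withDensity h
  calc ∑' Q : S, _
      = ∑' Q : S, ((μ (Q : Cube n).triple.set)⁻¹ *
          ∫⁻ x in (Q : Cube n).set, g x / h x ∂μ) ^ β * μ (E Q) := tsum_congr fun Q => by
        rw [withDensity_apply _ (Q : Cube n).triple.measurableSet_set_s10,
          withDensity_apply _ (hE Q Q.2),
          setLIntegral_div_withDensity hh hh₀ hh_top g (Q : Cube n).measurableSet_set_s10]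
    _ ≤ C * ∫⁻ x, (g x / h x) ^ β ∂μ :=
        Cube.tsum_rpow_mul_measure_le hτ hN hβ μ hES hE hdisj (hg.div hh)
    _ = C * ∫⁻ x, g x ^ β * ENNReal.ofReal (w x ^ (-(1 / (p - 1)))) := by
        rw [lintegral_div_rpow_withDensity hh hh₀ hh_top g (by linarith)]
        congr 1
        refine lintegral_congr_ae ?_
        filter_upwards [hw_pos] with x hx
        rw [ofReal_rpow_of_pos hx, show 1 - β = -(1 / (p - 1)) by
          simp only [β]; field_simp [sub_ne_zero.2 hp.ne']; ring]
    _ ≤ _ := by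
        gcongr
        rw [ofReal_add toReal_nonneg zero_le_one, ofReal_toReal hC]
        exact le_self_add
end
end
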